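/- arXiv:1604.08076 — 9 statements merged into one kernel-verified Lean document; each statement's English description precedes it below -/
import Mathlib

section
/- The image of the range map 𝒯₂ equals Q₂. Moreover, for (𝒯₁,𝒯₂) ∈ Q₂, the fiber 𝒯₂⁻¹(𝒯₁,𝒯₂) has exactly two elements if (𝒯₁,𝒯₂) lies in the topological interior of Q₂, and exactly one element if (𝒯₁,𝒯₂) lies in the topological boundary of Q₂ (i.e. one of the three defining inequalities holds with equality). -/
/-!
Write `d = m₂ - m₁` and let `J` be a right-angle rotation of the plane. A point
`x = m₁ + a • d + b • J d` satisfies `‖x - m₁‖² = (a² + b²)‖d‖²` and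
`‖x - m₂‖² = ((a - 1)² + b²)‖d‖²`, so prescribing both distances `r₁, r₂` fixes `a` and
determines `b` up to sign through `(2‖d‖²b)² = H`, where `H` is Heron's product (sixteen times
the squared area of a triangle with sides `‖d‖, r₁, r₂`). On `Q₂` we have `H ≥ 0`, with `H > 0`
exactly on the interior; on the boundary the two mirror-image solutions coincide.
-/

open Module Set
open scoped RealInnerProductSpace

def trianglePairs (δ : ℝ) : Set (ℝ × ℝ) :=
  {p | p.1 - p.2 ≤ δ ∧ p.2 - p.1 ≤ δ ∧ δ ≤ p.1 + p.2}

def heronProduct (δ r₁ r₂ : ℝ) : ℝ :=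
  (r₁ + r₂ + δ) * (r₁ + r₂ - δ) * (δ + r₁ - r₂) * (δ - r₁ + r₂)

theorem isClosed_trianglePairs (δ : ℝ) : IsClosed (trianglePairs δ) := by
  simp only [trianglePairs, ofPred_and]
  exact (isClosed_le (by fun_prop) continuous_const).inter <|
    (isClosed_le (by fun_prop) continuous_const).inter (isClosed_le continuous_const (by fun_prop))

theorem interior_trianglePairs (δ : ℝ) :
    interior (trianglePairs δ) = {p | p.1 - p.2 < δ ∧ p.2 - p.1 < δ ∧ δ < p.1 + p.2} := by
  let L : ℝ × ℝ ≃ₜ ℝ × ℝ :=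
    { toFun p := (p.1 - p.2, p.1 + p.2)
      invFun q := ((q.2 + q.1) / 2, (q.2 - q.1) / 2)
      left_inv p := by ext <;> simp only <;> ring
      right_inv q := by ext <;> simp only <;> ring
      continuous_toFun := by fun_prop
      continuous_invFun := by fun_prop }
  have hL : trianglePairs δ = L ⁻¹' (Icc (-δ) δ ×ˢ Ici δ) := by
    ext p
    simp only [trianglePairs, L, mem_ofPred_eq, mem_preimage, Homeomorph.homeomorph_mk_coe,
      Equiv.coe_fn_mk, mem_prod, mem_Icc, mem_Ici]
    exact ⟨fun ⟨h₁, h₂, h₃⟩ => ⟨⟨by linarith, h₁⟩, h₃⟩, fun ⟨⟨h₁, h₂⟩, h₃⟩ => ⟨h₂, by linarith, h₃⟩⟩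
  rw [hL, ← L.preimage_interior, interior_prod_eq, interior_Icc, interior_Ici]
  ext p
  simp only [L, mem_ofPred_eq, mem_preimage, Homeomorph.homeomorph_mk_coe,
      Equiv.coe_fn_mk, mem_prod, mem_Ioo, mem_Ioi]
  exact ⟨fun ⟨⟨h₁, h₂⟩, h₃⟩ => ⟨h₂, by linarith, h₃⟩, fun ⟨h₁, h₂, h₃⟩ => ⟨⟨by linarith, h₁⟩, h₃⟩⟩

theorem heronProduct_nonneg {δ : ℝ} {p : ℝ × ℝ} (hδ : 0 < δ) (hp : p ∈ trianglePairs δ) :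
    0 ≤ heronProduct δ p.1 p.2 := by
  obtain ⟨h₁, h₂, h₃⟩ := hp
  unfold heronProduct
  have : 0 ≤ p.1 + p.2 + δ := by linarith
  have : 0 ≤ p.1 + p.2 - δ := by linarith
  have : 0 ≤ δ + p.1 - p.2 := by linarith
  have : 0 ≤ δ - p.1 + p.2 := by linarith
  positivity

theorem heronProduct_pos_iff {δ : ℝ} {p : ℝ × ℝ} (hδ : 0 < δ) (hp : p ∈ trianglePairs δ) :
    0 < heronProduct δ p.1 p.2 ↔ p ∈ interior (trianglePairs δ) := by
  obtain ⟨h₁, h₂, h₃⟩ := hp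
  rw [interior_trianglePairs]
  unfold heronProduct
  constructor
  · intro hH
    refine ⟨lt_of_le_of_ne h₁ fun h => ?_, lt_of_le_of_ne h₂ fun h => ?_,
      lt_of_le_of_ne h₃ fun h => ?_⟩ <;>
    · rw [← h] at hH; linarith
  · rintro ⟨h₁, h₂, h₃⟩
    have : 0 < p.1 + p.2 + δ := by linarith
    have : 0 < p.1 + p.2 - δ := by linarith
    have : 0 < δ + p.1 - p.2 := by linarith
    have : 0 < δ - p.1 + p.2 := by linarith
    positivity

theorem sq_add_sq_mul_eq_and_iff {a b δ r₁ r₂ : ℝ} (hδ : 0 < δ) :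
    (a ^ 2 + b ^ 2) * δ ^ 2 = r₁ ^ 2 ∧ ((a - 1) ^ 2 + b ^ 2) * δ ^ 2 = r₂ ^ 2 ↔
      a = (r₁ ^ 2 - r₂ ^ 2 + δ ^ 2) / (2 * δ ^ 2) ∧ (2 * δ ^ 2 * b) ^ 2 = heronProduct δ r₁ r₂ := by
  unfold heronProduct
  constructor
  · rintro ⟨h₁, h₂⟩
    have ha : 2 * δ ^ 2 * a = r₁ ^ 2 - r₂ ^ 2 + δ ^ 2 := by linear_combination h₁ - h₂
    refine ⟨by field_simp; linarith, ?_⟩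
    linear_combination 4 * δ ^ 2 * h₁ - (2 * δ ^ 2 * a + r₁ ^ 2 - r₂ ^ 2 + δ ^ 2) * ha
  · rintro ⟨rfl, hb⟩
    constructor <;> field_simp <;> linear_combination hb

section RangeMap

variable {E : Type*}

def rangeMap [SeminormedAddCommGroup E] (m₁ m₂ x : E) : ℝ × ℝ := (‖x - m₁‖, ‖x - m₂‖)

theorem rangeMap_mem_trianglePairs [SeminormedAddCommGroup E] (m₁ m₂ x : E) :
    rangeMap m₁ m₂ x ∈ trianglePairs ‖m₂ - m₁‖ := by
  have h : (x - m₁) - (x - m₂) = m₂ - m₁ := by abel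
  refine ⟨?_, ?_, ?_⟩
  · simpa only [rangeMap, h] using norm_sub_norm_le (x - m₁) (x - m₂)
  · simpa only [rangeMap, ← h, norm_sub_rev (x - m₁)] using norm_sub_norm_le (x - m₂) (x - m₁)
  · simpa only [rangeMap, h] using norm_sub_le (x - m₁) (x - m₂)

variable [NormedAddCommGroup E] [InnerProductSpace ℝ E] [Fact (finrank ℝ E = 2)]

namespace Orientation

variable (o : Orientation ℝ E (Fin 2))

local notation "J" => o.rightAngleRotation

theorem exists_smul_add_smul_rightAngleRotation_eq {d : E} (hd : d ≠ 0) (y : E) :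
    ∃ a b : ℝ, a • d + b • J d = y :=
  ⟨_, _, by simpa [Fin.sum_univ_two] using (o.basisRightAngleRotation d hd).sum_repr y⟩

theorem norm_smul_add_smul_rightAngleRotation_sq (d : E) (a b : ℝ) :
    ‖a • d + b • J d‖ ^ 2 = (a ^ 2 + b ^ 2) * ‖d‖ ^ 2 := by
  rw [norm_add_sq_real, real_inner_smul_left, real_inner_smul_right,
    inner_rightAngleRotation_right, areaForm_apply_self, norm_smul, norm_smul,
    LinearIsometryEquiv.norm_map, Real.norm_eq_abs, Real.norm_eq_abs, mul_pow, mul_pow, sq_abs,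
    sq_abs]
  ring

theorem rangeMap_preimage_singleton {m₁ m₂ : E} (hm : m₁ ≠ m₂) {p : ℝ × ℝ}
    (hp : p ∈ trianglePairs ‖m₂ - m₁‖) :
    rangeMap m₁ m₂ ⁻¹' {p} =
      {m₁ + ((p.1 ^ 2 - p.2 ^ 2 + ‖m₂ - m₁‖ ^ 2) / (2 * ‖m₂ - m₁‖ ^ 2)) • (m₂ - m₁) +
          (√(heronProduct ‖m₂ - m₁‖ p.1 p.2) / (2 * ‖m₂ - m₁‖ ^ 2)) • J (m₂ - m₁),
        m₁ + ((p.1 ^ 2 - p.2 ^ 2 + ‖m₂ - m₁‖ ^ 2) / (2 * ‖m₂ - m₁‖ ^ 2)) • (m₂ - m₁) -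
          (√(heronProduct ‖m₂ - m₁‖ p.1 p.2) / (2 * ‖m₂ - m₁‖ ^ 2)) • J (m₂ - m₁)} := by
  set d := m₂ - m₁
  set δ := ‖d‖
  set s := (p.1 ^ 2 - p.2 ^ 2 + δ ^ 2) / (2 * δ ^ 2)
  set t := √(heronProduct δ p.1 p.2) / (2 * δ ^ 2)
  have hδ : 0 < δ := norm_pos_iff.2 (sub_ne_zero.2 hm.symm)
  have ht : (2 * δ ^ 2 * t) ^ 2 = heronProduct δ p.1 p.2 := by
    rw [mul_div_cancel₀ _ (by positivity), Real.sq_sqrt (heronProduct_nonneg hδ hp)]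
  have hmem : ∀ x a b, a • d + b • J d = x - m₁ →
      (x ∈ rangeMap m₁ m₂ ⁻¹' {p} ↔ a = s ∧ (2 * δ ^ 2 * b) ^ 2 = heronProduct δ p.1 p.2) := by
    intro x a b hx
    have hx₂ : (a - 1) • d + b • J d = x - m₂ := by
      rw [sub_smul, one_smul, sub_add_eq_add_sub, hx]
      simp only [d]
      abel
    obtain ⟨h₁, h₂, h₃⟩ := hp
    rw [← sq_add_sq_mul_eq_and_iff hδ, ← o.norm_smul_add_smul_rightAngleRotation_sq,
      ← o.norm_smul_add_smul_rightAngleRotation_sq, hx, hx₂, mem_preimage, mem_singleton_iff,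
      rangeMap, Prod.ext_iff, sq_eq_sq₀ (norm_nonneg _) (by linarith),
      sq_eq_sq₀ (norm_nonneg _) (by linarith)]
  apply Subset.antisymm
  · intro x hx
    obtain ⟨a, b, hab⟩ :=
      o.exists_smul_add_smul_rightAngleRotation_eq (sub_ne_zero.2 hm.symm) (x - m₁)
    obtain ⟨rfl, hb⟩ := (hmem x a b hab).1 hx
    have hδ₂ : 2 * δ ^ 2 ≠ 0 := by positivity
    rw [← ht, sq_eq_sq_iff_eq_or_eq_neg, ← mul_neg, mul_right_inj' hδ₂, mul_right_inj' hδ₂] at hb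
    rcases hb with rfl | rfl
    · left
      rw [add_assoc, hab]
      abel
    · right
      rw [mem_singleton_iff, add_sub_assoc, sub_eq_add_neg, ← neg_smul, hab]
      abel
  · rintro x (rfl | rfl)
    · exact (hmem _ s t (by abel)).2 ⟨rfl, ht⟩
    · exact (hmem _ s (-t) (by rw [neg_smul]; abel)).2 ⟨rfl, by rw [mul_neg, neg_sq, ht]⟩

end Orientation

attribute [local instance] FiniteDimensional.of_fact_finrank_eq_two

open Classical in
theorem ncard_rangeMap_preimage_singleton {m₁ m₂ : E} (hm : m₁ ≠ m₂) {p : ℝ × ℝ}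
    (hp : p ∈ trianglePairs ‖m₂ - m₁‖) :
    (rangeMap m₁ m₂ ⁻¹' {p}).ncard = if p ∈ interior (trianglePairs ‖m₂ - m₁‖) then 2 else 1 := by
  let o : Orientation ℝ E (Fin 2) := (finBasisOfFinrankEq ℝ E Fact.out).orientation
  have hδ : 0 < ‖m₂ - m₁‖ := norm_pos_iff.2 (sub_ne_zero.2 hm.symm)
  have hJ : o.rightAngleRotation (m₂ - m₁) ≠ 0 := by
    rw [Ne, LinearIsometryEquiv.map_eq_zero_iff, sub_eq_zero]
    exact hm.symm
  rw [o.rangeMap_preimage_singleton hm hp, ← heronProduct_pos_iff hδ hp]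
  split_ifs with hH
  · refine ncard_pair fun h => ?_
    replace h := add_left_cancel (h.trans (sub_eq_add_neg _ _)) |>.trans (neg_smul _ _).symm
    exact (div_pos (Real.sqrt_pos.2 hH) (by positivity)).ne'
      (self_eq_neg.1 (smul_left_injective ℝ hJ h))
  · rw [le_antisymm (not_lt.1 hH) (heronProduct_nonneg hδ hp)]
    simp

theorem range_rangeMap {m₁ m₂ : E} (hm : m₁ ≠ m₂) :
    range (rangeMap m₁ m₂) = trianglePairs ‖m₂ - m₁‖ := by
  refine Subset.antisymm (range_subset_iff.2 (rangeMap_mem_trianglePairs m₁ m₂)) fun p hp => ?_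
  refine nonempty_of_ncard_ne_zero (s := rangeMap m₁ m₂ ⁻¹' {p}) ?_
  rw [ncard_rangeMap_preimage_singleton hm hp]
  split_ifs <;> simp

end RangeMap

/-- The image of the range map 𝒯₂ equals Q₂; the fiber over a point of Q₂
has exactly two elements if the point is in the interior of Q₂ and exactly one element
if it is in the boundary of Q₂. -/
theorem stmt0 (m₁ m₂ : EuclideanSpace ℝ (Fin 2)) (hm : m₁ ≠ m₂)
    (T2 : EuclideanSpace ℝ (Fin 2) → ℝ × ℝ)
    (hT2 : ∀ x, T2 x = (‖x - m₁‖, ‖x - m₂‖))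
    (Q2 : Set (ℝ × ℝ))
    (hQ2 : Q2 = {p : ℝ × ℝ | p.1 - p.2 ≤ ‖m₂ - m₁‖ ∧ p.2 - p.1 ≤ ‖m₂ - m₁‖ ∧
      ‖m₂ - m₁‖ ≤ p.1 + p.2}) :
    Set.range T2 = Q2 ∧
    ∀ p ∈ Q2,
      (p ∈ interior Q2 → (T2 ⁻¹' {p}).ncard = 2) ∧
      (p ∈ frontier Q2 → (T2 ⁻¹' {p}).ncard = 1) := by
  have : Fact (finrank ℝ (EuclideanSpace ℝ (Fin 2)) = 2) := ⟨finrank_euclideanSpace_fin⟩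
  obtain rfl : T2 = rangeMap m₁ m₂ := funext hT2
  obtain rfl : Q2 = trianglePairs ‖m₂ - m₁‖ := hQ2
  refine ⟨range_rangeMap hm, fun p hp => ⟨fun hi => ?_, fun hf => ?_⟩⟩
  · rw [ncard_rangeMap_preimage_singleton hm hp, if_pos hi]
  · rw [(isClosed_trianglePairs _).frontier_eq] at hf
    rw [ncard_rangeMap_preimage_singleton hm hp, if_neg hf.2]
end

section
/- Let (𝒯₁,𝒯₂) ∈ Q₂ and set a = (d₂₁² + 𝒯₁² − 𝒯₂²)/(2 d₂₁). Then 𝒯₁² − a² ≥ 0, and the fiber 𝒯₂⁻¹(𝒯₁,𝒯₂) equals exactly the set {x₊, x₋}, where x_± = m₁ + a·(m₂−m₁)/d₂₁ ± √(𝒯₁² − a²)·R((m₂−m₁)/d₂₁) and R : ℝ² → ℝ² denotes rotation of the plane by +π/2 (i.e. R(u,v) = (−v,u)). -/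
/-!
Let `u` be the unit vector from `m₁` to `m₂` and `J u` its rotation by `π/2`, so that `u, J u` is
an orthonormal basis of the plane. Subtracting the two circle equations leaves a linear one, which
fixes the `u`-coordinate of `x - m₁` to be `a`; the first circle equation then forces the
`J u`-coordinate to be `±√(T₁² - a²)`. The radicand is nonnegative because `(2 d T₁)² - (2 d a)²`
factors into the four triangle inequalities (Heron's formula).
-/

open RealInnerProductSpace

lemma triangle_foot_sq_le {d T₁ T₂ : ℝ} (hd : 0 < d) (h₁ : T₁ - T₂ ≤ d) (h₂ : T₂ - T₁ ≤ d)
    (h₃ : d ≤ T₁ + T₂) : ((d ^ 2 + T₁ ^ 2 - T₂ ^ 2) / (2 * d)) ^ 2 ≤ T₁ ^ 2 := by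
  rw [div_pow, div_le_iff₀ (by positivity)]
  nlinarith [mul_nonneg (mul_nonneg (sub_nonneg.2 h₁) (sub_nonneg.2 h₂))
    (mul_nonneg (sub_nonneg.2 h₃) (by linarith : 0 ≤ T₁ + T₂ + d))]

section InnerProductSpace

variable {E : Type*} [NormedAddCommGroup E] [InnerProductSpace ℝ E]

lemma norm_sub_smul_eq_iff_inner_eq {u y : E} (hu : ‖u‖ = 1) {d T₁ T₂ : ℝ} (hd : d ≠ 0)
    (hy : ‖y‖ = T₁) (hT₂ : 0 ≤ T₂) :
    ‖y - d • u‖ = T₂ ↔ ⟪y, u⟫ = (d ^ 2 + T₁ ^ 2 - T₂ ^ 2) / (2 * d) := by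
  rw [← sq_eq_sq₀ (norm_nonneg _) hT₂, norm_sub_sq_real, inner_smul_right, norm_smul, hu, hy,
    Real.norm_eq_abs, mul_one, sq_abs, eq_div_iff (mul_ne_zero two_ne_zero hd)]
  constructor <;> intro h <;> linarith

lemma norm_smul_add_smul_sq_of_orthonormal {u v : E} (hu : ‖u‖ = 1) (hv : ‖v‖ = 1)
    (huv : ⟪u, v⟫ = 0) (α β : ℝ) : ‖α • u + β • v‖ ^ 2 = α ^ 2 + β ^ 2 := by
  rw [norm_add_sq_real, inner_smul_left, inner_smul_right, huv, norm_smul, norm_smul, hu, hv]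
  simp

lemma inner_smul_add_smul_of_orthonormal {u v : E} (hu : ‖u‖ = 1) (huv : ⟪u, v⟫ = 0)
    (α β : ℝ) : ⟪α • u + β • v, u⟫ = α := by
  rw [inner_add_left, inner_smul_left, inner_smul_left, real_inner_comm u v, huv,
    real_inner_self_eq_norm_sq, hu]
  simp

end InnerProductSpace

namespace EuclideanSpace

def rot90 (p : EuclideanSpace ℝ (Fin 2)) : EuclideanSpace ℝ (Fin 2) :=
  (WithLp.equiv 2 (Fin 2 → ℝ)).symm ![-(p 1), p 0]

@[simp] lemma rot90_apply_zero (p : EuclideanSpace ℝ (Fin 2)) : rot90 p 0 = -p 1 := rfl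

@[simp] lemma rot90_apply_one (p : EuclideanSpace ℝ (Fin 2)) : rot90 p 1 = p 0 := rfl

lemma norm_sq_fin_two (p : EuclideanSpace ℝ (Fin 2)) : ‖p‖ ^ 2 = p 0 ^ 2 + p 1 ^ 2 := by
  simp [norm_sq_eq, Fin.sum_univ_two]

lemma inner_fin_two (p q : EuclideanSpace ℝ (Fin 2)) : ⟪p, q⟫ = p 0 * q 0 + p 1 * q 1 := by
  simp [PiLp.inner_apply, Fin.sum_univ_two, mul_comm]

lemma norm_rot90 (p : EuclideanSpace ℝ (Fin 2)) : ‖rot90 p‖ = ‖p‖ := by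
  rw [← sq_eq_sq₀ (norm_nonneg _) (norm_nonneg _), norm_sq_fin_two, norm_sq_fin_two]
  simp [add_comm]

lemma inner_rot90_eq_zero (p : EuclideanSpace ℝ (Fin 2)) : ⟪p, rot90 p⟫ = 0 := by
  simp [inner_fin_two]; ring

lemma eq_inner_smul_add_inner_rot90_smul {u : EuclideanSpace ℝ (Fin 2)} (hu : ‖u‖ = 1)
    (y : EuclideanSpace ℝ (Fin 2)) : y = ⟪y, u⟫ • u + ⟪y, rot90 u⟫ • rot90 u := by
  have hu' := norm_sq_fin_two u
  rw [hu, one_pow] at hu'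
  ext i
  fin_cases i <;> simp [inner_fin_two] <;> linear_combination y _ * hu'

end EuclideanSpace

open EuclideanSpace

lemma norm_eq_and_norm_sub_smul_eq_iff {u : EuclideanSpace ℝ (Fin 2)} (hu : ‖u‖ = 1)
    {d T₁ T₂ a : ℝ} (hd : d ≠ 0) (hT₁ : 0 ≤ T₁) (hT₂ : 0 ≤ T₂)
    (ha : a = (d ^ 2 + T₁ ^ 2 - T₂ ^ 2) / (2 * d)) (haT₁ : a ^ 2 ≤ T₁ ^ 2)
    (y : EuclideanSpace ℝ (Fin 2)) :
    ‖y‖ = T₁ ∧ ‖y - d • u‖ = T₂ ↔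
      y = a • u + √(T₁ ^ 2 - a ^ 2) • rot90 u ∨ y = a • u - √(T₁ ^ 2 - a ^ 2) • rot90 u := by
  have hJ : ‖rot90 u‖ = 1 := (norm_rot90 u).trans hu
  have hs : √(T₁ ^ 2 - a ^ 2) ^ 2 = T₁ ^ 2 - a ^ 2 := Real.sq_sqrt (sub_nonneg.2 haT₁)
  simp only [sub_eq_add_neg (a • u), ← neg_smul]
  constructor
  · rintro ⟨hy, hy'⟩
    rw [norm_sub_smul_eq_iff_inner_eq hu hd hy hT₂, ← ha] at hy'
    have hβ : ⟪y, rot90 u⟫ ^ 2 = √(T₁ ^ 2 - a ^ 2) ^ 2 := by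
      have := norm_smul_add_smul_sq_of_orthonormal hu hJ (inner_rot90_eq_zero u)
        ⟪y, u⟫ ⟪y, rot90 u⟫
      rw [← eq_inner_smul_add_inner_rot90_smul hu, hy, hy'] at this
      linarith
    rw [eq_inner_smul_add_inner_rot90_smul hu y, hy']
    rcases sq_eq_sq_iff_eq_or_eq_neg.1 hβ with h | h <;> simp [h]
  · have hβ : ∀ β : ℝ, β ^ 2 = T₁ ^ 2 - a ^ 2 →
        ‖a • u + β • rot90 u‖ = T₁ ∧ ‖a • u + β • rot90 u - d • u‖ = T₂ := by
      intro β hβ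
      have hy : ‖a • u + β • rot90 u‖ = T₁ := by
        rw [← sq_eq_sq₀ (norm_nonneg _) hT₁,
          norm_smul_add_smul_sq_of_orthonormal hu hJ (inner_rot90_eq_zero u), hβ, add_sub_cancel]
      rw [norm_sub_smul_eq_iff_inner_eq hu hd hy hT₂,
        inner_smul_add_smul_of_orthonormal hu (inner_rot90_eq_zero u), ← ha]
      exact ⟨hy, rfl⟩
    rintro (rfl | rfl)
    · exact hβ _ hs
    · exact hβ _ (by rw [neg_sq, hs])

lemma setOf_norm_sub_eq_and_norm_sub_eq (c : EuclideanSpace ℝ (Fin 2))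
    {u : EuclideanSpace ℝ (Fin 2)} (hu : ‖u‖ = 1) {d T₁ T₂ a : ℝ} (hd : d ≠ 0) (hT₁ : 0 ≤ T₁)
    (hT₂ : 0 ≤ T₂) (ha : a = (d ^ 2 + T₁ ^ 2 - T₂ ^ 2) / (2 * d)) (haT₁ : a ^ 2 ≤ T₁ ^ 2) :
    {x | ‖x - c‖ = T₁ ∧ ‖x - (c + d • u)‖ = T₂} =
      {c + a • u + √(T₁ ^ 2 - a ^ 2) • rot90 u, c + a • u - √(T₁ ^ 2 - a ^ 2) • rot90 u} := by
  ext x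
  simpa only [Set.mem_ofPred_eq, Set.mem_insert_iff, Set.mem_singleton_iff, ← sub_sub,
    add_assoc, add_sub_assoc, sub_eq_iff_eq_add']
    using norm_eq_and_norm_sub_smul_eq_iff hu hd hT₁ hT₂ ha haT₁ (x - c)

/-- explicit description of the fiber of 𝒯₂ over a point of Q₂. -/
theorem stmt1 (m₁ m₂ : EuclideanSpace ℝ (Fin 2)) (hm : m₁ ≠ m₂)
    (T₁ T₂ : ℝ)
    (hQ1 : T₁ - T₂ ≤ ‖m₂ - m₁‖) (hQ2 : T₂ - T₁ ≤ ‖m₂ - m₁‖) (hQ3 : ‖m₂ - m₁‖ ≤ T₁ + T₂)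
    (a : ℝ) (ha : a = (‖m₂ - m₁‖ ^ 2 + T₁ ^ 2 - T₂ ^ 2) / (2 * ‖m₂ - m₁‖))
    (R : EuclideanSpace ℝ (Fin 2) → EuclideanSpace ℝ (Fin 2))
    (hR : ∀ p, R p = (WithLp.equiv 2 (Fin 2 → ℝ)).symm ![-(p 1), p 0]) :
    0 ≤ T₁ ^ 2 - a ^ 2 ∧
    {x : EuclideanSpace ℝ (Fin 2) | ‖x - m₁‖ = T₁ ∧ ‖x - m₂‖ = T₂} =
      {m₁ + (a / ‖m₂ - m₁‖) • (m₂ - m₁) +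
          Real.sqrt (T₁ ^ 2 - a ^ 2) • R ((‖m₂ - m₁‖)⁻¹ • (m₂ - m₁)),
       m₁ + (a / ‖m₂ - m₁‖) • (m₂ - m₁) -
          Real.sqrt (T₁ ^ 2 - a ^ 2) • R ((‖m₂ - m₁‖)⁻¹ • (m₂ - m₁))} := by
  obtain rfl : R = rot90 := funext hR
  set d := ‖m₂ - m₁‖
  have hd : 0 < d := norm_sub_pos_iff.2 hm.symm
  have haT₁ : a ^ 2 ≤ T₁ ^ 2 := ha ▸ triangle_foot_sq_le hd hQ1 hQ2 hQ3
  set u := d⁻¹ • (m₂ - m₁)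
  have hu : ‖u‖ = 1 := norm_smul_inv_norm (sub_ne_zero.2 hm.symm)
  have hm₂ : m₂ = m₁ + d • u := by simp [u, smul_smul, hd.ne']
  have hau : (a / d) • (m₂ - m₁) = a • u := by rw [div_eq_mul_inv, mul_smul]
  refine ⟨sub_nonneg.2 haT₁, ?_⟩
  rw [hau, hm₂]
  exact setOf_norm_sub_eq_and_norm_sub_eq m₁ hu hd.ne' (by linarith) (by linarith) ha haT₁
end

section
/- The map 𝒯₃ is differentiable on D = ℝ² ∖ {m₁,m₂,m₃}, and its Jacobian matrix J(x) at x ∈ D is the 3×2 matrix whose i-th row is the unit vector (x − m_i)/d_i(x). Then: (i) if m₁, m₂, m₃ are not collinear, rank J(x) = 2 for every x ∈ D; (ii) if m₁, m₂, m₃ lie on a line r, then rank J(x) = 1 for x ∈ r ∩ D and rank J(x) = 2 for x ∈ D ∖ r. -/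
/-!
The `i`-th row of the Jacobian is the unit vector `(x - mᵢ) / ‖x - mᵢ‖`. Rescaling rows by
nonzero scalars does not change their span, so `rank J(x) = dim span {x - mᵢ}`, which is the
dimension of the direction of the affine hull of `{m₁, m₂, m₃, x}`. Since `x ≠ m₁`, this
dimension is `1` exactly when the four points are collinear, and `2` otherwise, the ambient
plane being two-dimensional.
-/

open Module Submodule Set

theorem hasFDerivAt_norm {F : Type*} [NormedAddCommGroup F] [InnerProductSpace ℝ F] {x : F}
    (hx : x ≠ 0) : HasFDerivAt (‖·‖) (‖x‖⁻¹ • innerSL ℝ x) x := by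
  have hsqrt := (hasStrictFDerivAt_norm_sq x).hasFDerivAt.sqrt (by positivity)
  simp only [Real.sqrt_sq (norm_nonneg _)] at hsqrt
  convert hsqrt using 1
  rw [← Nat.cast_smul_eq_nsmul ℝ, smul_smul]
  congr 1
  field_simp
  norm_num

theorem hasFDerivAt_norm_sub {F : Type*} [NormedAddCommGroup F] [InnerProductSpace ℝ F]
    {a x : F} (hx : x ≠ a) :
    HasFDerivAt (fun y => ‖y - a‖) (‖x - a‖⁻¹ • innerSL ℝ (x - a)) x :=
  ((hasFDerivAt_norm (sub_ne_zero.2 hx)).comp x ((hasFDerivAt_id x).sub_const a)).congr_fderiv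
    (ContinuousLinearMap.comp_id _)

theorem Submodule.span_range_smul_of_ne_zero {K V ι : Type*} [DivisionRing K] [AddCommGroup V]
    [Module K V] {c : ι → K} (hc : ∀ i, c i ≠ 0) (v : ι → V) :
    span K (range fun i => c i • v i) = span K (range v) := by
  refine le_antisymm (span_le.2 ?_) (span_le.2 ?_)
  · rintro _ ⟨i, rfl⟩
    exact smul_mem _ _ (subset_span ⟨i, rfl⟩)
  · rintro _ ⟨i, rfl⟩
    rw [← inv_smul_smul₀ (hc i) (v i)]
    exact smul_mem _ _ (subset_span ⟨i, rfl⟩)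

theorem vectorSpan_range_union_singleton (k : Type*) {V P ι : Type*} [Ring k] [AddCommGroup V]
    [Module k V] [AddTorsor V P] (p : ι → P) (x : P) :
    vectorSpan k (range p ∪ {x}) = span k (range fun i => x -ᵥ p i) := by
  rw [vectorSpan_eq_span_vsub_set_left k (mem_union_right _ (mem_singleton x)), image_union,
    image_singleton, vsub_self, span_union, span_singleton_eq_bot.2 rfl, sup_bot_eq, ← range_comp]
  rfl

theorem Matrix.rank_of_euclidean_eq_finrank_span {𝕜 ι κ : Type*} [RCLike 𝕜] [Finite ι]
    [Fintype κ] (v : ι → EuclideanSpace 𝕜 κ) :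
    (Matrix.of fun i l => v i l).rank = finrank 𝕜 (span 𝕜 (range v)) := by
  rw [Matrix.rank_eq_finrank_span_row, ← (WithLp.linearEquiv 2 𝕜 (κ → 𝕜)).finrank_map_eq,
    ← span_image, ← range_comp]
  rfl

section

variable {ι κ : Type*} [Fintype κ]

noncomputable def distanceMap (m : ι → EuclideanSpace ℝ κ) (x : EuclideanSpace ℝ κ) :
    EuclideanSpace ℝ ι :=
  WithLp.toLp 2 fun i => ‖x - m i‖

noncomputable def distanceJacobian (m : ι → EuclideanSpace ℝ κ) (x : EuclideanSpace ℝ κ) :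
    Matrix ι κ ℝ :=
  Matrix.of fun i l => (x l - m i l) / ‖x - m i‖

variable {m : ι → EuclideanSpace ℝ κ} {x : EuclideanSpace ℝ κ}

theorem hasFDerivAt_distanceMap [Fintype ι] [DecidableEq κ] (hx : ∀ i, x ≠ m i) :
    HasFDerivAt (distanceMap m)
      (LinearMap.toContinuousLinearMap (Matrix.toEuclideanLin (distanceJacobian m x))) x := by
  rw [← hasFDerivWithinAt_univ, hasFDerivWithinAt_piLp]
  intro i
  refine (hasFDerivAt_norm_sub (hx i)).hasFDerivWithinAt.congr_fderiv ?_
  ext v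
  simp only [ContinuousLinearMap.comp_apply, LinearMap.coe_toContinuousLinearMap',
    PiLp.proj_apply, Matrix.ofLp_toLpLin, Matrix.toLin'_apply, Matrix.mulVec, dotProduct,
    distanceJacobian, Matrix.of_apply, smul_apply, coe_innerSL_apply, PiLp.inner_apply,
    RCLike.inner_apply, conj_trivial, PiLp.sub_apply, smul_eq_mul, Finset.mul_sum]
  exact Finset.sum_congr rfl fun l _ => by ring

theorem distanceJacobian_eq_of_smul (x : EuclideanSpace ℝ κ) :
    distanceJacobian m x = Matrix.of fun i l => (‖x - m i‖⁻¹ • (x - m i)) l := by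
  ext i l
  simp [distanceJacobian, div_eq_inv_mul]

theorem rank_distanceJacobian [Finite ι] (hx : ∀ i, x ≠ m i) :
    (distanceJacobian m x).rank = finrank ℝ (vectorSpan ℝ (range m ∪ {x})) := by
  rw [distanceJacobian_eq_of_smul, Matrix.rank_of_euclidean_eq_finrank_span,
    span_range_smul_of_ne_zero (fun i => inv_ne_zero (norm_ne_zero_iff.2 (sub_ne_zero.2 (hx i)))),
    vectorSpan_range_union_singleton]
  rfl

end

section

variable {k V P : Type*} [DivisionRing k] [AddCommGroup V] [Module k V] [AddTorsor V P]
  [FiniteDimensional k V]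

theorem Collinear.finrank_vectorSpan_eq_one {s : Set P} (h : Collinear k s) {p q : P}
    (hp : p ∈ s) (hq : q ∈ s) (hpq : p ≠ q) : finrank k (vectorSpan k s) = 1 := by
  have hne : vectorSpan k s ≠ ⊥ := fun hs =>
    hpq (((vectorSpan_eq_bot_iff_subsingleton k).1 hs) hp hq)
  exact le_antisymm (collinear_iff_finrank_le_one.1 h) (one_le_finrank_iff.2 hne)

theorem finrank_vectorSpan_eq_two_of_not_collinear (hV : finrank k V = 2) {s : Set P}
    (h : ¬Collinear k s) : finrank k (vectorSpan k s) = 2 := by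
  rw [collinear_iff_finrank_le_one, not_le] at h
  have := (vectorSpan k s).finrank_le
  omega

end

theorem stmt2_general (m : Fin 3 → EuclideanSpace ℝ (Fin 2))
    (J : EuclideanSpace ℝ (Fin 2) → Matrix (Fin 3) (Fin 2) ℝ)
    (hJ : ∀ x i l, J x i l = (x l - m i l) / ‖x - m i‖)
    (T3 : EuclideanSpace ℝ (Fin 2) → EuclideanSpace ℝ (Fin 3))
    (hT3 : ∀ x i, T3 x i = ‖x - m i‖) :
    (∀ x : EuclideanSpace ℝ (Fin 2), (∀ i, x ≠ m i) →
      HasFDerivAt T3 (LinearMap.toContinuousLinearMap (Matrix.toEuclideanLin (J x))) x) ∧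
    (¬ Collinear ℝ (Set.range m) →
      ∀ x : EuclideanSpace ℝ (Fin 2), (∀ i, x ≠ m i) → (J x).rank = 2) ∧
    (Collinear ℝ (Set.range m) →
      ∀ x : EuclideanSpace ℝ (Fin 2), (∀ i, x ≠ m i) →
        ((Collinear ℝ (Set.range m ∪ {x}) → (J x).rank = 1) ∧
         (¬ Collinear ℝ (Set.range m ∪ {x}) → (J x).rank = 2))) := by
  obtain rfl : J = distanceJacobian m := funext fun x => Matrix.ext (hJ x)
  obtain rfl : T3 = distanceMap m := funext fun x => PiLp.ext (hT3 x)
  have rank_eq_two {x} (hx : ∀ i, x ≠ m i) (hnc : ¬Collinear ℝ (range m ∪ {x})) :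
      (distanceJacobian m x).rank = 2 := by
    rw [rank_distanceJacobian hx]
    exact finrank_vectorSpan_eq_two_of_not_collinear finrank_euclideanSpace_fin hnc
  refine ⟨fun x hx => hasFDerivAt_distanceMap hx,
    fun hm x hx => rank_eq_two hx fun hc => hm (hc.subset subset_union_left),
    fun _ x hx => ⟨fun hc => ?_, rank_eq_two hx⟩⟩
  rw [rank_distanceJacobian hx]
  exact hc.finrank_vectorSpan_eq_one (mem_union_left _ (mem_range_self 0))
    (mem_union_right _ (mem_singleton x)) (hx 0).symm

/-- 𝒯₃ is differentiable on D = ℝ² ∖ {m₁,m₂,m₃} with Jacobian J(x) whose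
i-th row is (x − mᵢ)/dᵢ(x); rank of J(x) is 2 everywhere on D if the receivers are not
collinear, while if they lie on a line r, the rank is 1 on r ∩ D and 2 elsewhere. -/
theorem stmt2 (m : Fin 3 → EuclideanSpace ℝ (Fin 2)) (hm : Function.Injective m)
    (J : EuclideanSpace ℝ (Fin 2) → Matrix (Fin 3) (Fin 2) ℝ)
    (hJ : ∀ x i l, J x i l = (x l - m i l) / ‖x - m i‖)
    (T3 : EuclideanSpace ℝ (Fin 2) → EuclideanSpace ℝ (Fin 3))
    (hT3 : ∀ x i, T3 x i = ‖x - m i‖) :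
    (∀ x : EuclideanSpace ℝ (Fin 2), (∀ i, x ≠ m i) →
      HasFDerivAt T3 (LinearMap.toContinuousLinearMap (Matrix.toEuclideanLin (J x))) x) ∧
    (¬ Collinear ℝ (Set.range m) →
      ∀ x : EuclideanSpace ℝ (Fin 2), (∀ i, x ≠ m i) → (J x).rank = 2) ∧
    (Collinear ℝ (Set.range m) →
      ∀ x : EuclideanSpace ℝ (Fin 2), (∀ i, x ≠ m i) →
        ((Collinear ℝ (Set.range m ∪ {x}) → (J x).rank = 1) ∧
         (¬ Collinear ℝ (Set.range m ∪ {x}) → (J x).rank = 2))) :=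
  stmt2_general m J hJ T3 hT3
end

section
/- Assume m₁, m₂, m₃ are not collinear, set a = (d₃₂·d₃₁)/(d₃₂ d₃₁), b = (d₃₂·d₂₁)/(d₃₂ d₂₁), c = (d₃₁·d₂₁)/(d₃₁ d₂₁), and let F̄(t₀,t₁,t₂,t₃) = t₀⁴ + t₁⁴ + t₂⁴ + t₃⁴ − 2a(t₁²t₂² + t₀²t₃²) + 2b(t₁²t₃² + t₀²t₂²) − 2c(t₂²t₃² + t₀²t₁²). Then F̄ and all four partial derivatives ∂F̄/∂t_l vanish at each of the 16 points (0, ε₁√d₃₂, ε₂√d₃₁, ε₃√d₂₁), (ε₁√d₃₂, 0, ε₂√d₂₁, ε₃√d₃₁), (ε₁√d₃₁, ε₂√d₂₁, 0, ε₃√d₃₂) and (ε₁√d₂₁, ε₂√d₃₁, ε₃√d₃₂, 0), for every choice of signs ε₁, ε₂, ε₃ ∈ {+1,−1}; i.e. these 16 projective points are singular points of the projective quartic surface F̄ = 0 (which is thus a Kummer quartic). -/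
/-!
Writing `s = t²` coordinatewise, `F̄(t) = sᵀ M s` for a symmetric matrix `M` built from `a, b, c`,
so `∂F̄/∂tᵢ = 4 tᵢ (M s)ᵢ` and `F̄ = Σ tᵢ² (M s)ᵢ`. Hence `t` is a singular
point as soon as every coordinate has `tᵢ = 0` or `(M s)ᵢ = 0`. At the 16 points `s` is a
permutation of `(0, d₃₂, d₃₁, d₂₁)`, and the three rows that must vanish are the projection formulas
of the triangle: each side is the signed sum of the projections of the other two onto it, e.g.
`d₃₂ = a d₃₁ - b d₂₁`.
-/

open scoped Matrix

section Triangle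

variable {E : Type*} [NormedAddCommGroup E] [InnerProductSpace ℝ E]

theorem real_inner_div_norm_mul_norm_mul_norm_left (x y : E) :
    inner ℝ x y / (‖x‖ * ‖y‖) * ‖x‖ = inner ℝ x y / ‖y‖ := by
  rcases eq_or_ne x 0 with rfl | hx
  · simp
  · field_simp

theorem real_inner_div_norm_mul_norm_mul_norm_right (x y : E) :
    inner ℝ x y / (‖x‖ * ‖y‖) * ‖y‖ = inner ℝ x y / ‖x‖ := by
  rw [mul_comm ‖x‖, real_inner_comm, real_inner_div_norm_mul_norm_mul_norm_left]

theorem real_inner_self_div_norm (x : E) : inner ℝ x x / ‖x‖ = ‖x‖ := by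
  rw [real_inner_self_eq_norm_sq, sq, mul_self_div_self]

theorem triangle_projection_relations (m₁ m₂ m₃ : E) {a b c : ℝ}
    (ha : a = inner ℝ (m₃ - m₂) (m₃ - m₁) / (‖m₃ - m₂‖ * ‖m₃ - m₁‖))
    (hb : b = inner ℝ (m₃ - m₂) (m₂ - m₁) / (‖m₃ - m₂‖ * ‖m₂ - m₁‖))
    (hc : c = inner ℝ (m₃ - m₁) (m₂ - m₁) / (‖m₃ - m₁‖ * ‖m₂ - m₁‖)) :
    ‖m₃ - m₂‖ - a * ‖m₃ - m₁‖ + b * ‖m₂ - m₁‖ = 0 ∧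
    ‖m₃ - m₁‖ - a * ‖m₃ - m₂‖ - c * ‖m₂ - m₁‖ = 0 ∧
    ‖m₂ - m₁‖ + b * ‖m₃ - m₂‖ - c * ‖m₃ - m₁‖ = 0 := by
  have hB : m₃ - m₁ = (m₃ - m₂) + (m₂ - m₁) := by abel
  set x := m₃ - m₂
  set y := m₂ - m₁
  subst ha hb hc
  simp only [hB, real_inner_div_norm_mul_norm_mul_norm_left,
    real_inner_div_norm_mul_norm_mul_norm_right]
  refine ⟨?_, ?_, ?_⟩
  · rw [inner_add_right]
    linear_combination -real_inner_self_div_norm x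
  · have h := real_inner_self_div_norm (x + y)
    rw [inner_add_left, inner_add_right, inner_add_right, real_inner_comm x y] at h
    rw [inner_add_right, inner_add_left]
    linear_combination -h
  · rw [inner_add_left]
    linear_combination -real_inner_self_div_norm y

end Triangle

section QuadraticInSquares

variable {n : Type*} [Fintype n]

noncomputable def quadraticInSquares (M : Matrix n n ℝ) (t : n → ℝ) : ℝ :=
  (t ^ 2) ⬝ᵥ (M *ᵥ t ^ 2)

theorem hasFDerivAt_quadraticInSquares {M : Matrix n n ℝ} (hM : M.IsSymm) (t : n → ℝ) :
    HasFDerivAt (quadraticInSquares M)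
      (∑ i, (4 * t i * (M *ᵥ t ^ 2) i) • ContinuousLinearMap.proj (R := ℝ) (φ := fun _ ↦ ℝ) i)
      t := by
  have hsq : ∀ i, HasFDerivAt (fun t : n → ℝ => t i ^ 2)
      ((2 * t i) • ContinuousLinearMap.proj i) t := fun i => by
    simpa using (hasFDerivAt_apply (𝕜 := ℝ) (F' := fun _ : n => ℝ) i t).pow 2
  have H := HasFDerivAt.fun_sum (u := Finset.univ) fun i _ =>
    (hsq i).fun_mul (HasFDerivAt.fun_sum (u := Finset.univ) fun j _ => (hsq j).const_mul (M i j))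
  refine H.congr_fderiv ?_
  ext h
  have hswap : ∑ i, t i ^ 2 * ∑ j, M i j * (2 * t j * h j) =
      ∑ j, (M *ᵥ t ^ 2) j * (2 * t j * h j) := by
    simp only [Finset.mul_sum, Finset.sum_mul, Matrix.mulVec, dotProduct, Pi.pow_apply]
    rw [Finset.sum_comm]
    refine Finset.sum_congr rfl fun j _ => Finset.sum_congr rfl fun i _ => ?_
    rw [hM.apply]
    ring
  simp only [sum_apply, add_apply, smul_apply, ContinuousLinearMap.proj_apply, smul_eq_mul]
  rw [Finset.sum_add_distrib, hswap, ← Finset.sum_add_distrib]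
  refine Finset.sum_congr rfl fun i _ => ?_
  simp only [Matrix.mulVec, dotProduct, Pi.pow_apply]
  ring

theorem quadraticInSquares_singular {M : Matrix n n ℝ} (hM : M.IsSymm) {t : n → ℝ}
    (h : ∀ i, t i * (M *ᵥ t ^ 2) i = 0) :
    quadraticInSquares M t = 0 ∧ fderiv ℝ (quadraticInSquares M) t = 0 := by
  constructor
  · have euler : quadraticInSquares M t = ∑ i, t i * (t i * (M *ᵥ t ^ 2) i) := by
      simp only [quadraticInSquares, dotProduct, Pi.pow_apply, sq, mul_assoc]
    simp [euler, h]
  · rw [(hasFDerivAt_quadraticInSquares hM t).fderiv]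
    simp [mul_assoc, h]

end QuadraticInSquares

section Kummer

def kummerMatrix (a b c : ℝ) : Matrix (Fin 4) (Fin 4) ℝ :=
  !![1, -c, b, -a; -c, 1, -a, b; b, -a, 1, -c; -a, b, -c, 1]

theorem kummerMatrix_isSymm (a b c : ℝ) : (kummerMatrix a b c).IsSymm :=
  Matrix.IsSymm.ext fun i j => by fin_cases i <;> fin_cases j <;> rfl

theorem quadraticInSquares_kummerMatrix (a b c : ℝ) (t : Fin 4 → ℝ) :
    quadraticInSquares (kummerMatrix a b c) t =
      t 0 ^ 4 + t 1 ^ 4 + t 2 ^ 4 + t 3 ^ 4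
      - 2 * a * (t 1 ^ 2 * t 2 ^ 2 + t 0 ^ 2 * t 3 ^ 2)
      + 2 * b * (t 1 ^ 2 * t 3 ^ 2 + t 0 ^ 2 * t 2 ^ 2)
      - 2 * c * (t 2 ^ 2 * t 3 ^ 2 + t 0 ^ 2 * t 1 ^ 2) := by
  simp only [quadraticInSquares, dotProduct, Pi.pow_apply, Matrix.mulVec, kummerMatrix,
    Matrix.of_apply, Matrix.cons_val', Matrix.cons_val_fin_one, Fin.sum_univ_four,
    Matrix.cons_val_zero, Matrix.cons_val_one, Matrix.cons_val]
  ring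

theorem kummerMatrix_singular {a b c u v w : ℝ} (h₁ : u - a * v + b * w = 0)
    (h₂ : v - a * u - c * w = 0) (h₃ : w + b * u - c * v = 0) {t : Fin 4 → ℝ}
    (ht : t ^ 2 ∈ ({![0, u, v, w], ![u, 0, w, v], ![v, w, 0, u], ![w, v, u, 0]} :
      Set (Fin 4 → ℝ))) :
    quadraticInSquares (kummerMatrix a b c) t = 0 ∧
      fderiv ℝ (quadraticInSquares (kummerMatrix a b c)) t = 0 := by
  refine quadraticInSquares_singular (kummerMatrix_isSymm a b c) fun i => ?_
  suffices (t ^ 2) i = 0 ∨ (kummerMatrix a b c *ᵥ t ^ 2) i = 0 by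
    rcases this with h | h
    · simp_all
    · simp [h]
  simp only [Set.mem_insert_iff, Set.mem_singleton_iff] at ht
  rcases ht with h | h | h | h <;> rw [h] <;> fin_cases i <;>
    simp [kummerMatrix, Matrix.mulVec, dotProduct, Fin.sum_univ_four] <;>
    exact Or.inr (by linarith)

end Kummer

theorem sign_mul_sqrt_sq {ε x : ℝ} (hε : ε = 1 ∨ ε = -1) (hx : 0 ≤ x) : (ε * √x) ^ 2 = x := by
  rcases hε with rfl | rfl <;> simp [hx]

theorem stmt6_general (m₁ m₂ m₃ : EuclideanSpace ℝ (Fin 2))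
    (a b c : ℝ)
    (ha : a = (inner ℝ (m₃ - m₂) (m₃ - m₁) : ℝ) / (‖m₃ - m₂‖ * ‖m₃ - m₁‖))
    (hb : b = (inner ℝ (m₃ - m₂) (m₂ - m₁) : ℝ) / (‖m₃ - m₂‖ * ‖m₂ - m₁‖))
    (hc : c = (inner ℝ (m₃ - m₁) (m₂ - m₁) : ℝ) / (‖m₃ - m₁‖ * ‖m₂ - m₁‖))
    (G : (Fin 4 → ℝ) → ℝ)
    (hG : ∀ t : Fin 4 → ℝ, G t =
      t 0 ^ 4 + t 1 ^ 4 + t 2 ^ 4 + t 3 ^ 4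
      - 2 * a * (t 1 ^ 2 * t 2 ^ 2 + t 0 ^ 2 * t 3 ^ 2)
      + 2 * b * (t 1 ^ 2 * t 3 ^ 2 + t 0 ^ 2 * t 2 ^ 2)
      - 2 * c * (t 2 ^ 2 * t 3 ^ 2 + t 0 ^ 2 * t 1 ^ 2)) :
    ∀ ε₁ ε₂ ε₃ : ℝ, (ε₁ = 1 ∨ ε₁ = -1) → (ε₂ = 1 ∨ ε₂ = -1) → (ε₃ = 1 ∨ ε₃ = -1) →
    ∀ p ∈ ({![0, ε₁ * Real.sqrt ‖m₃ - m₂‖, ε₂ * Real.sqrt ‖m₃ - m₁‖, ε₃ * Real.sqrt ‖m₂ - m₁‖],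
            ![ε₁ * Real.sqrt ‖m₃ - m₂‖, 0, ε₂ * Real.sqrt ‖m₂ - m₁‖, ε₃ * Real.sqrt ‖m₃ - m₁‖],
            ![ε₁ * Real.sqrt ‖m₃ - m₁‖, ε₂ * Real.sqrt ‖m₂ - m₁‖, 0, ε₃ * Real.sqrt ‖m₃ - m₂‖],
            ![ε₁ * Real.sqrt ‖m₂ - m₁‖, ε₂ * Real.sqrt ‖m₃ - m₁‖, ε₃ * Real.sqrt ‖m₃ - m₂‖, 0]} :
          Set (Fin 4 → ℝ)),
      G p = 0 ∧ fderiv ℝ G p = 0 := by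
  obtain ⟨h₁, h₂, h₃⟩ := triangle_projection_relations m₁ m₂ m₃ ha hb hc
  obtain rfl : G = quadraticInSquares (kummerMatrix a b c) :=
    funext fun t => by rw [hG, quadraticInSquares_kummerMatrix]
  intro ε₁ ε₂ ε₃ hε₁ hε₂ hε₃ p hp
  refine kummerMatrix_singular h₁ h₂ h₃ ?_
  simp only [Set.mem_insert_iff, Set.mem_singleton_iff] at hp ⊢
  rcases hp with rfl | rfl | rfl | rfl <;>
    simp [funext_iff, Fin.forall_fin_succ, sign_mul_sqrt_sq, hε₁, hε₂, hε₃]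

/-- the homogeneous quartic F̄ and all its partial derivatives vanish at the
16 points listed, i.e. these are singular points of the projective quartic (a Kummer
quartic surface). -/
theorem stmt6 (m₁ m₂ m₃ : EuclideanSpace ℝ (Fin 2))
    (hd12 : m₁ ≠ m₂) (hd13 : m₁ ≠ m₃) (hd23 : m₂ ≠ m₃)
    (hnc : ¬ Collinear ℝ ({m₁, m₂, m₃} : Set (EuclideanSpace ℝ (Fin 2))))
    (a b c : ℝ)
    (ha : a = (inner ℝ (m₃ - m₂) (m₃ - m₁) : ℝ) / (‖m₃ - m₂‖ * ‖m₃ - m₁‖))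
    (hb : b = (inner ℝ (m₃ - m₂) (m₂ - m₁) : ℝ) / (‖m₃ - m₂‖ * ‖m₂ - m₁‖))
    (hc : c = (inner ℝ (m₃ - m₁) (m₂ - m₁) : ℝ) / (‖m₃ - m₁‖ * ‖m₂ - m₁‖))
    (G : (Fin 4 → ℝ) → ℝ)
    (hG : ∀ t : Fin 4 → ℝ, G t =
      t 0 ^ 4 + t 1 ^ 4 + t 2 ^ 4 + t 3 ^ 4
      - 2 * a * (t 1 ^ 2 * t 2 ^ 2 + t 0 ^ 2 * t 3 ^ 2)
      + 2 * b * (t 1 ^ 2 * t 3 ^ 2 + t 0 ^ 2 * t 2 ^ 2)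
      - 2 * c * (t 2 ^ 2 * t 3 ^ 2 + t 0 ^ 2 * t 1 ^ 2)) :
    ∀ ε₁ ε₂ ε₃ : ℝ, (ε₁ = 1 ∨ ε₁ = -1) → (ε₂ = 1 ∨ ε₂ = -1) → (ε₃ = 1 ∨ ε₃ = -1) →
    ∀ p ∈ ({![0, ε₁ * Real.sqrt ‖m₃ - m₂‖, ε₂ * Real.sqrt ‖m₃ - m₁‖, ε₃ * Real.sqrt ‖m₂ - m₁‖],
            ![ε₁ * Real.sqrt ‖m₃ - m₂‖, 0, ε₂ * Real.sqrt ‖m₂ - m₁‖, ε₃ * Real.sqrt ‖m₃ - m₁‖],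
            ![ε₁ * Real.sqrt ‖m₃ - m₁‖, ε₂ * Real.sqrt ‖m₂ - m₁‖, 0, ε₃ * Real.sqrt ‖m₃ - m₂‖],
            ![ε₁ * Real.sqrt ‖m₂ - m₁‖, ε₂ * Real.sqrt ‖m₃ - m₁‖, ε₃ * Real.sqrt ‖m₃ - m₂‖, 0]} :
          Set (Fin 4 → ℝ)),
      G p = 0 ∧ fderiv ℝ G p = 0 :=
  stmt6_general m₁ m₂ m₃ a b c ha hb hc G hG
end

section
/- Assume m₁, m₂, m₃ are not collinear. Then Q₃ is a convex set contained in the first octant W = {(𝒯₁,𝒯₂,𝒯₃) : 𝒯₁ ≥ 0, 𝒯₂ ≥ 0, 𝒯₃ ≥ 0}, it is unbounded along the direction (1,1,1) (for every 𝒯 ∈ Q₃ and every t ≥ 0, 𝒯 + t(1,1,1) ∈ Q₃), and the image of the range map satisfies Im(𝒯₃) ⊆ Q₃; in particular, for every x ∈ ℝ² the twelve inequalities defining Q₃ hold with 𝒯_i = d_i(x). -/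
/-!
Each of the twelve inequalities is linear in `𝒯`, so `Q₃` is a polyhedron, hence convex. Adding
`u - v ≥ -d` to `u + v ≥ d` gives `u ≥ 0`. Moving along `(1,1,1)` leaves the differences
`𝒯ᵢ - 𝒯ⱼ` fixed and changes the last three expressions by `t` times `d₃₂ + d₃₁ - d₂₁` (and its
permutations), which is nonnegative by the triangle inequality for the receivers. For a range
vector `𝒯 = 𝒯₃(x)` the first nine inequalities are triangle inequalities in the triangles
`x mᵢ mⱼ`, and the last three are Ptolemy's inequality for the quadrangles formed by `x` and the
receivers.
-/

open EuclideanGeometry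

/-- The polyhedron `Q₃` cut out by receivers with mutual distances `d₂₁`, `d₃₁`, `d₃₂`. -/
def rangePolyhedron (d₂₁ d₃₁ d₃₂ : ℝ) : Set (ℝ × ℝ × ℝ) :=
  {T | (-d₂₁ ≤ T.1 - T.2.1 ∧ T.1 - T.2.1 ≤ d₂₁ ∧ d₂₁ ≤ T.1 + T.2.1) ∧
    (-d₃₁ ≤ T.1 - T.2.2 ∧ T.1 - T.2.2 ≤ d₃₁ ∧ d₃₁ ≤ T.1 + T.2.2) ∧
    (-d₃₂ ≤ T.2.1 - T.2.2 ∧ T.2.1 - T.2.2 ≤ d₃₂ ∧ d₃₂ ≤ T.2.1 + T.2.2) ∧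
    0 ≤ d₃₂ * T.1 + d₃₁ * T.2.1 - d₂₁ * T.2.2 ∧
    0 ≤ d₃₂ * T.1 - d₃₁ * T.2.1 + d₂₁ * T.2.2 ∧
    0 ≤ -(d₃₂ * T.1) + d₃₁ * T.2.1 + d₂₁ * T.2.2}

section rangePolyhedron

variable {d₂₁ d₃₁ d₃₂ : ℝ}

theorem convex_rangePolyhedron : Convex ℝ (rangePolyhedron d₂₁ d₃₁ d₃₂) := by
  simp only [rangePolyhedron, Set.ofPred_and]
  repeat' apply Convex.inter
  all_goals first | apply convex_halfSpace_ge | apply convex_halfSpace_le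
  all_goals exact ⟨fun _ _ => by simp only [Prod.fst_add, Prod.snd_add]; ring,
    fun _ _ => by simp only [Prod.smul_fst, Prod.smul_snd, smul_eq_mul]; ring⟩

theorem rangePolyhedron_subset_nonneg :
    rangePolyhedron d₂₁ d₃₁ d₃₂ ⊆ {T | 0 ≤ T.1 ∧ 0 ≤ T.2.1 ∧ 0 ≤ T.2.2} := by
  rintro T ⟨⟨_, _, _⟩, ⟨-, _, _⟩, -⟩
  exact ⟨by linarith, by linarith, by linarith⟩

theorem add_smul_one_mem_rangePolyhedron (h₂₁ : d₂₁ ≤ d₃₁ + d₃₂) (h₃₁ : d₃₁ ≤ d₂₁ + d₃₂)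
    (h₃₂ : d₃₂ ≤ d₂₁ + d₃₁) {T : ℝ × ℝ × ℝ} (hT : T ∈ rangePolyhedron d₂₁ d₃₁ d₃₂) {t : ℝ}
    (ht : 0 ≤ t) : T + t • ((1, 1, 1) : ℝ × ℝ × ℝ) ∈ rangePolyhedron d₂₁ d₃₁ d₃₂ := by
  obtain ⟨T₁, T₂, T₃⟩ := T
  obtain ⟨⟨_, _, _⟩, ⟨_, _, _⟩, ⟨_, _, _⟩, _, _, _⟩ := hT
  simp only [rangePolyhedron, Prod.smul_mk, smul_eq_mul, mul_one, Prod.mk_add_mk]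
  refine ⟨⟨?_, ?_, ?_⟩, ⟨?_, ?_, ?_⟩, ⟨?_, ?_, ?_⟩, ?_, ?_, ?_⟩ <;>
    linarith [mul_le_mul_of_nonneg_left h₂₁ ht, mul_le_mul_of_nonneg_left h₃₁ ht,
      mul_le_mul_of_nonneg_left h₃₂ ht]

end rangePolyhedron

theorem dist_sub_dist_le_and_le_dist_add_dist {α : Type*} [PseudoMetricSpace α] (x p q : α) :
    -dist q p ≤ dist x p - dist x q ∧ dist x p - dist x q ≤ dist q p ∧
      dist q p ≤ dist x p + dist x q := by
  have h := abs_le.mp (abs_dist_sub_le p q x)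
  rw [dist_comm x p, dist_comm x q, dist_comm q p]
  exact ⟨h.1, h.2, dist_triangle_right p q x⟩

theorem dist_mul_dist_le_of_ptolemy {V P : Type*} [NormedAddCommGroup V]
    [InnerProductSpace ℝ V] [MetricSpace P] [NormedAddTorsor V P] (x p q r : P) :
    dist q p * dist x r ≤ dist r q * dist x p + dist r p * dist x q := by
  have h := mul_dist_le_mul_dist_add_mul_dist p x q r
  rw [dist_comm p q, dist_comm p x, dist_comm q r, dist_comm p r] at h
  linarith

theorem dist_mem_rangePolyhedron {V P : Type*} [NormedAddCommGroup V]
    [InnerProductSpace ℝ V] [MetricSpace P] [NormedAddTorsor V P] (x m₁ m₂ m₃ : P) :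
    (dist x m₁, dist x m₂, dist x m₃) ∈
      rangePolyhedron (dist m₂ m₁) (dist m₃ m₁) (dist m₃ m₂) := by
  have p₁ := dist_mul_dist_le_of_ptolemy x m₁ m₂ m₃
  have p₂ := dist_mul_dist_le_of_ptolemy x m₁ m₃ m₂
  have p₃ := dist_mul_dist_le_of_ptolemy x m₂ m₃ m₁
  rw [dist_comm m₂ m₃] at p₂
  rw [dist_comm m₁ m₂, dist_comm m₁ m₃] at p₃
  exact ⟨dist_sub_dist_le_and_le_dist_add_dist x m₁ m₂,
    dist_sub_dist_le_and_le_dist_add_dist x m₁ m₃,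
    dist_sub_dist_le_and_le_dist_add_dist x m₂ m₃, by linarith, by linarith, by linarith⟩

theorem stmt8_general (m₁ m₂ m₃ : EuclideanSpace ℝ (Fin 2))
    (Q3 : Set (ℝ × ℝ × ℝ))
    (hQ3 : Q3 = {T : ℝ × ℝ × ℝ |
      (-‖m₂ - m₁‖ ≤ T.1 - T.2.1 ∧ T.1 - T.2.1 ≤ ‖m₂ - m₁‖ ∧ ‖m₂ - m₁‖ ≤ T.1 + T.2.1) ∧
      (-‖m₃ - m₁‖ ≤ T.1 - T.2.2 ∧ T.1 - T.2.2 ≤ ‖m₃ - m₁‖ ∧ ‖m₃ - m₁‖ ≤ T.1 + T.2.2) ∧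
      (-‖m₃ - m₂‖ ≤ T.2.1 - T.2.2 ∧ T.2.1 - T.2.2 ≤ ‖m₃ - m₂‖ ∧ ‖m₃ - m₂‖ ≤ T.2.1 + T.2.2) ∧
      0 ≤ ‖m₃ - m₂‖ * T.1 + ‖m₃ - m₁‖ * T.2.1 - ‖m₂ - m₁‖ * T.2.2 ∧
      0 ≤ ‖m₃ - m₂‖ * T.1 - ‖m₃ - m₁‖ * T.2.1 + ‖m₂ - m₁‖ * T.2.2 ∧
      0 ≤ -(‖m₃ - m₂‖ * T.1) + ‖m₃ - m₁‖ * T.2.1 + ‖m₂ - m₁‖ * T.2.2}) :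
    Convex ℝ Q3 ∧
    Q3 ⊆ {T : ℝ × ℝ × ℝ | 0 ≤ T.1 ∧ 0 ≤ T.2.1 ∧ 0 ≤ T.2.2} ∧
    (∀ T ∈ Q3, ∀ t : ℝ, 0 ≤ t → T + t • ((1, 1, 1) : ℝ × ℝ × ℝ) ∈ Q3) ∧
    Set.range (fun x : EuclideanSpace ℝ (Fin 2) => (‖x - m₁‖, ‖x - m₂‖, ‖x - m₃‖)) ⊆ Q3 := by
  have hQ : Q3 = rangePolyhedron (dist m₂ m₁) (dist m₃ m₁) (dist m₃ m₂) := by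
    simp only [hQ3, rangePolyhedron, dist_eq_norm]
  rw [hQ]
  refine ⟨convex_rangePolyhedron, rangePolyhedron_subset_nonneg,
    fun T hT t ht => add_smul_one_mem_rangePolyhedron ?_ ?_ ?_ hT ht, ?_⟩
  · linarith [dist_triangle m₂ m₃ m₁, dist_comm m₂ m₃]
  · linarith [dist_triangle m₃ m₂ m₁]
  · linarith [dist_triangle m₃ m₁ m₂, dist_comm m₁ m₂]
  · rintro _ ⟨x, rfl⟩
    simpa only [dist_eq_norm] using dist_mem_rangePolyhedron x m₁ m₂ m₃

/-- Q₃ is convex, contained in the first octant, unbounded along (1,1,1),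
and contains the image of the range map 𝒯₃. -/
theorem stmt8 (m₁ m₂ m₃ : EuclideanSpace ℝ (Fin 2))
    (hnc : ¬ Collinear ℝ ({m₁, m₂, m₃} : Set (EuclideanSpace ℝ (Fin 2))))
    (Q3 : Set (ℝ × ℝ × ℝ))
    (hQ3 : Q3 = {T : ℝ × ℝ × ℝ |
      (-‖m₂ - m₁‖ ≤ T.1 - T.2.1 ∧ T.1 - T.2.1 ≤ ‖m₂ - m₁‖ ∧ ‖m₂ - m₁‖ ≤ T.1 + T.2.1) ∧
      (-‖m₃ - m₁‖ ≤ T.1 - T.2.2 ∧ T.1 - T.2.2 ≤ ‖m₃ - m₁‖ ∧ ‖m₃ - m₁‖ ≤ T.1 + T.2.2) ∧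
      (-‖m₃ - m₂‖ ≤ T.2.1 - T.2.2 ∧ T.2.1 - T.2.2 ≤ ‖m₃ - m₂‖ ∧ ‖m₃ - m₂‖ ≤ T.2.1 + T.2.2) ∧
      0 ≤ ‖m₃ - m₂‖ * T.1 + ‖m₃ - m₁‖ * T.2.1 - ‖m₂ - m₁‖ * T.2.2 ∧
      0 ≤ ‖m₃ - m₂‖ * T.1 - ‖m₃ - m₁‖ * T.2.1 + ‖m₂ - m₁‖ * T.2.2 ∧
      0 ≤ -(‖m₃ - m₂‖ * T.1) + ‖m₃ - m₁‖ * T.2.1 + ‖m₂ - m₁‖ * T.2.2}) :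
    Convex ℝ Q3 ∧
    Q3 ⊆ {T : ℝ × ℝ × ℝ | 0 ≤ T.1 ∧ 0 ≤ T.2.1 ∧ 0 ≤ T.2.2} ∧
    (∀ T ∈ Q3, ∀ t : ℝ, 0 ≤ t → T + t • ((1, 1, 1) : ℝ × ℝ × ℝ) ∈ Q3) ∧
    Set.range (fun x : EuclideanSpace ℝ (Fin 2) => (‖x - m₁‖, ‖x - m₂‖, ‖x - m₃‖)) ⊆ Q3 :=
  stmt8_general m₁ m₂ m₃ Q3 hQ3
end

section
/- (i) If m₁, m₂, m₃ ∈ ℝ² are not collinear, then a := ((m₃−m₂)·(m₃−m₁))/(d₃₂ d₃₁) and c := ((m₃−m₁)·(m₂−m₁))/(d₃₁ d₂₁) satisfy −1 < a < 1, −1 < c < 1 and a + c > 0. (ii) Conversely, for every pair (a,c) ∈ (−1,1) × (−1,1) with a + c > 0 and every L > 0, there exist non-collinear points m₁, m₂, m₃ ∈ ℝ² with ‖m₂ − m₁‖ = L, ((m₃−m₂)·(m₃−m₁))/(d₃₂ d₃₁) = a and ((m₃−m₁)·(m₂−m₁))/(d₃₁ d₂₁) = c. Thus the parameter space of planar three-receiver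 configurations (up to rigid motions and reflections) is {(a,c) ∈ (−1,1)² : a + c > 0} × ℝ⁺. -/
/-!
The two ratios are the cosines of the angles `γ = ∠ m₂ m₃ m₁` and `α = ∠ m₃ m₁ m₂` of the
triangle. In a non-degenerate triangle both angles lie in `(0, π)` and `α + γ < π`; since `cos` is
strictly decreasing on `[0, π]` and `cos (π - α) = -cos α`, for angles in `[0, π]` the condition
`α + γ < π` is equivalent to `0 < cos α + cos γ`. Conversely, `α = arccos c` and `γ = arccos a`
satisfy these constraints, and a triangle with base `L` and these two angles is written down
explicitly, with the remaining side lengths given by the law of sines.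
-/

open EuclideanGeometry Real
open scoped InnerProductSpace

section InnerProductSpace

variable {V : Type*} [NormedAddCommGroup V] [InnerProductSpace ℝ V]

theorem cos_angle_eq_inner_div_norm_mul_norm (p₁ p₂ p₃ : V) :
    cos (∠ p₁ p₂ p₃) = ⟪p₁ - p₂, p₃ - p₂⟫_ℝ / (‖p₁ - p₂‖ * ‖p₃ - p₂‖) :=
  InnerProductGeometry.cos_angle _ _

theorem cos_angle_eq_inner_rev_div_norm_mul_norm (p₁ p₂ p₃ : V) :
    cos (∠ p₁ p₂ p₃) = ⟪p₂ - p₁, p₂ - p₃⟫_ℝ / (‖p₂ - p₁‖ * ‖p₂ - p₃‖) := by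
  rw [cos_angle_eq_inner_div_norm_mul_norm, ← neg_sub p₂ p₁, ← neg_sub p₂ p₃, inner_neg_neg,
    norm_neg, norm_neg]

end InnerProductSpace

theorem cos_add_cos_pos_iff {x y : ℝ} (hx : x ∈ Set.Icc 0 π) (hy : y ∈ Set.Icc 0 π) :
    0 < cos x + cos y ↔ x + y < π := by
  have hy' : π - y ∈ Set.Icc 0 π := ⟨by linarith [hy.2], by linarith [hy.1]⟩
  rw [← sub_neg_eq_add, sub_pos, ← cos_pi_sub, strictAntiOn_cos.lt_iff_gt hy' hx]
  constructor <;> intro h <;> linarith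

section Triangle

variable {V P : Type*} [NormedAddCommGroup V] [InnerProductSpace ℝ V] [MetricSpace P]
  [NormedAddTorsor V P] {p₁ p₂ p₃ : P}

theorem cos_angle_mem_Ioo_of_not_collinear (h : ¬Collinear ℝ ({p₁, p₂, p₃} : Set P)) :
    cos (∠ p₁ p₂ p₃) ∈ Set.Ioo (-1) 1 := by
  refine ⟨(neg_one_le_cos _).lt_of_ne ?_, (cos_le_one _).lt_of_ne ?_⟩
  · exact fun h' => angle_ne_pi_of_not_collinear h (cos_eq_neg_one_iff_angle_eq_pi.1 h'.symm)
  · exact mt cos_eq_one_iff_angle_eq_zero.1 (angle_ne_zero_of_not_collinear h)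

theorem cos_angle_add_cos_angle_pos_of_not_collinear (h : ¬Collinear ℝ ({p₁, p₂, p₃} : Set P)) :
    0 < cos (∠ p₂ p₃ p₁) + cos (∠ p₃ p₁ p₂) := by
  have hsum := angle_add_angle_add_angle_eq_pi p₃ (ne₁₂_of_not_collinear h).symm
  rw [cos_add_cos_pos_iff ⟨angle_nonneg _ _ _, angle_le_pi _ _ _⟩
    ⟨angle_nonneg _ _ _, angle_le_pi _ _ _⟩]
  linarith [angle_pos_of_not_collinear h]

end Triangle

noncomputable def unitVec (θ : ℝ) : EuclideanSpace ℝ (Fin 2) := !₂[cos θ, sin θ]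

theorem unitVec_apply_zero (θ : ℝ) : unitVec θ 0 = cos θ := rfl

theorem unitVec_apply_one (θ : ℝ) : unitVec θ 1 = sin θ := rfl

theorem norm_unitVec (θ : ℝ) : ‖unitVec θ‖ = 1 := by
  simp [unitVec, EuclideanSpace.norm_eq]

theorem unitVec_ne_zero (θ : ℝ) : unitVec θ ≠ 0 :=
  norm_ne_zero_iff.1 (by rw [norm_unitVec]; exact one_ne_zero)

theorem inner_unitVec_unitVec (θ φ : ℝ) : ⟪unitVec θ, unitVec φ⟫_ℝ = cos (φ - θ) := by
  simp [unitVec, EuclideanSpace.inner_eq_star_dotProduct, cos_sub]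

theorem angle_unitVec_unitVec {θ φ : ℝ} (h₀ : θ ≤ φ) (hπ : φ - θ ≤ π) :
    InnerProductGeometry.angle (unitVec θ) (unitVec φ) = φ - θ := by
  rw [InnerProductGeometry.angle, inner_unitVec_unitVec, norm_unitVec, norm_unitVec, mul_one,
    div_one, arccos_cos (sub_nonneg.2 h₀) hπ]

theorem exists_triangle_of_angles {α γ L : ℝ} (hα : 0 < α) (hγ : 0 < γ) (hαγ : α + γ < π)
    (hL : 0 < L) :
    ∃ m₁ m₂ m₃ : EuclideanSpace ℝ (Fin 2),
      ¬Collinear ℝ ({m₁, m₂, m₃} : Set (EuclideanSpace ℝ (Fin 2))) ∧ ‖m₂ - m₁‖ = L ∧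
        ∠ m₂ m₃ m₁ = γ ∧ ∠ m₃ m₁ m₂ = α := by
  have hsα : 0 < sin α := sin_pos_of_pos_of_lt_pi hα (by linarith)
  have hsγ : 0 < sin γ := sin_pos_of_pos_of_lt_pi hγ (by linarith)
  have hsαγ : 0 < sin (α + γ) := sin_pos_of_pos_of_lt_pi (by linarith) hαγ
  -- the side lengths `m₁m₃` and `m₃m₂` given by the law of sines
  set d := L * sin (α + γ) / sin γ
  set ρ := L * sin α / sin γ
  have hd : 0 < d := by positivity
  have hρ : 0 < ρ := by positivity
  have hside : L • unitVec α - d • unitVec 0 = -(ρ • unitVec (-γ)) := by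
    refine PiLp.ext (Fin.forall_fin_two.2 ⟨?_, ?_⟩)
    · simp only [PiLp.sub_apply, PiLp.neg_apply, PiLp.smul_apply, smul_eq_mul, unitVec_apply_zero,
        cos_zero, cos_neg, d, ρ, sin_add]
      field_simp
      ring
    · simp only [PiLp.sub_apply, PiLp.neg_apply, PiLp.smul_apply, smul_eq_mul, unitVec_apply_one,
        sin_zero, sin_neg, mul_zero, sub_zero, mul_neg, neg_neg, ρ]
      field_simp
  have hα₁ : ∠ (d • unitVec 0) 0 (L • unitVec α) = α := by
    rw [EuclideanGeometry.angle, vsub_eq_sub, vsub_eq_sub, sub_zero, sub_zero,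
      InnerProductGeometry.angle_smul_left_of_pos _ _ hd,
      InnerProductGeometry.angle_smul_right_of_pos _ _ hL, angle_unitVec_unitVec] <;> linarith
  refine ⟨0, L • unitVec α, d • unitVec 0, ?_, by simp [norm_smul, norm_unitVec, hL.le], ?_, hα₁⟩
  · rw [Set.pair_comm, Set.insert_comm,
      collinear_iff_eq_or_eq_or_angle_eq_zero_or_angle_eq_pi, hα₁]
    simp [unitVec_ne_zero, hd.ne', hL.ne', hα.ne', (show α < π by linarith).ne]
  · rw [EuclideanGeometry.angle, vsub_eq_sub, vsub_eq_sub, hside, zero_sub,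
      InnerProductGeometry.angle_neg_neg, InnerProductGeometry.angle_smul_left_of_pos _ _ hρ,
      InnerProductGeometry.angle_smul_right_of_pos _ _ hd, angle_unitVec_unitVec] <;> linarith

/-- characterization of the parameter space of planar three-receiver
configurations: (i) non-collinear receivers give (a,c) ∈ (−1,1)² with a + c > 0;
(ii) conversely every such (a,c) and every scale L > 0 is realized by some
non-collinear configuration. -/
theorem stmt10 :
    (∀ m₁ m₂ m₃ : EuclideanSpace ℝ (Fin 2),
      ¬ Collinear ℝ ({m₁, m₂, m₃} : Set (EuclideanSpace ℝ (Fin 2))) →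
      (-1 < (inner ℝ (m₃ - m₂) (m₃ - m₁) : ℝ) / (‖m₃ - m₂‖ * ‖m₃ - m₁‖) ∧
       (inner ℝ (m₃ - m₂) (m₃ - m₁) : ℝ) / (‖m₃ - m₂‖ * ‖m₃ - m₁‖) < 1 ∧
       -1 < (inner ℝ (m₃ - m₁) (m₂ - m₁) : ℝ) / (‖m₃ - m₁‖ * ‖m₂ - m₁‖) ∧
       (inner ℝ (m₃ - m₁) (m₂ - m₁) : ℝ) / (‖m₃ - m₁‖ * ‖m₂ - m₁‖) < 1 ∧
       0 < (inner ℝ (m₃ - m₂) (m₃ - m₁) : ℝ) / (‖m₃ - m₂‖ * ‖m₃ - m₁‖) +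
           (inner ℝ (m₃ - m₁) (m₂ - m₁) : ℝ) / (‖m₃ - m₁‖ * ‖m₂ - m₁‖))) ∧
    (∀ a c L : ℝ, -1 < a → a < 1 → -1 < c → c < 1 → 0 < a + c → 0 < L →
      ∃ m₁ m₂ m₃ : EuclideanSpace ℝ (Fin 2),
        ¬ Collinear ℝ ({m₁, m₂, m₃} : Set (EuclideanSpace ℝ (Fin 2))) ∧
        ‖m₂ - m₁‖ = L ∧
        (inner ℝ (m₃ - m₂) (m₃ - m₁) : ℝ) / (‖m₃ - m₂‖ * ‖m₃ - m₁‖) = a ∧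
        (inner ℝ (m₃ - m₁) (m₂ - m₁) : ℝ) / (‖m₃ - m₁‖ * ‖m₂ - m₁‖) = c) := by
  refine ⟨fun m₁ m₂ m₃ h => ?_, fun a c L ha₁ ha₂ hc₁ hc₂ hac hL => ?_⟩
  · have h₃ : ¬Collinear ℝ ({m₂, m₃, m₁} : Set (EuclideanSpace ℝ (Fin 2))) := by
      rwa [Set.pair_comm, Set.insert_comm]
    have h₁ : ¬Collinear ℝ ({m₃, m₁, m₂} : Set (EuclideanSpace ℝ (Fin 2))) := by
      rwa [Set.insert_comm, Set.pair_comm]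
    rw [← cos_angle_eq_inner_rev_div_norm_mul_norm m₂ m₃ m₁,
      ← cos_angle_eq_inner_div_norm_mul_norm m₃ m₁ m₂]
    obtain ⟨hγ₁, hγ₂⟩ := cos_angle_mem_Ioo_of_not_collinear h₃
    obtain ⟨hα₁, hα₂⟩ := cos_angle_mem_Ioo_of_not_collinear h₁
    exact ⟨hγ₁, hγ₂, hα₁, hα₂, cos_angle_add_cos_angle_pos_of_not_collinear h⟩
  · have hαγ : arccos c + arccos a < π := by
      rw [← cos_add_cos_pos_iff ⟨arccos_nonneg c, arccos_le_pi c⟩ ⟨arccos_nonneg a, arccos_le_pi a⟩,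
        cos_arccos hc₁.le hc₂.le, cos_arccos ha₁.le ha₂.le]
      linarith
    obtain ⟨m₁, m₂, m₃, hcol, hm₂, hγ, hα⟩ :=
      exists_triangle_of_angles (arccos_pos.2 hc₂) (arccos_pos.2 ha₂) hαγ hL
    refine ⟨m₁, m₂, m₃, hcol, hm₂, ?_, ?_⟩
    · rw [← cos_angle_eq_inner_rev_div_norm_mul_norm, hγ, cos_arccos ha₁.le ha₂.le]
    · rw [← cos_angle_eq_inner_div_norm_mul_norm, hα, cos_arccos hc₁.le hc₂.le]
end

section
/- Let m₁ ≠ m₂ ∈ ℝ², d₂₁ = ‖m₂ − m₁‖ and 0 < ρ < 1. Then: (i) for every (𝒯₁,𝒯₂) ∈ Q₂ one has (1−ρ)𝒯₁² + ρ𝒯₂² − ρ(1−ρ)d₂₁² ≥ 0, so that φ(𝒯₁,𝒯₂) := √((1−ρ)𝒯₁² + ρ𝒯₂² − ρ(1−ρ)d₂₁²) is well defined on Q₂; (ii) σ ∩ Q₃ equals the graph {(𝒯₁, 𝒯₂, φ(𝒯₁,𝒯₂)) : (𝒯₁,𝒯₂) ∈ Q₂}. -/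
/-!
Write `E = (1-ρ)a² + ρb² - ρ(1-ρ)d²` and `L = (1-ρ)a + ρb`. Everything follows from four identities:
`E = ((1-ρ)a - ρb)² + ρ(1-ρ)((a+b)² - d²)`, `L² - E = ρ(1-ρ)(d² - (a-b)²)`,
`E - (a - ρd)² = ρ(b-a+d)(a+b-d)` and `E - (b - (1-ρ)d)² = (1-ρ)(a-b+d)(a+b-d)`.
The first gives `E ≥ 0` on `Q₂`. On `σ ∩ Q₃` the first two inequalities add up to
`a + b - d ≤ 2c`, so `c ≥ 0` and `c = √E`; then `0 ≤ c ≤ L` gives `E ≤ L²`, i.e. `|a - b| ≤ d`. Conversely, on `Q₂` the last three identities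
say exactly that `c = √E` satisfies the inequalities of `Q₃`.
-/

/-- On `Q₂` the paper's `φ(𝒯₁, 𝒯₂)` is `√(phiSq ρ d₂₁ 𝒯₁ 𝒯₂)`. -/
def phiSq (ρ d a b : ℝ) : ℝ := (1 - ρ) * a ^ 2 + ρ * b ^ 2 - ρ * (1 - ρ) * d ^ 2

section

variable {ρ d a b c : ℝ}

lemma phiSq_eq_sq_add : phiSq ρ d a b
    = ((1 - ρ) * a - ρ * b) ^ 2 + ρ * (1 - ρ) * ((a + b) ^ 2 - d ^ 2) := by
  unfold phiSq; ring

lemma sq_sub_phiSq :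
    ((1 - ρ) * a + ρ * b) ^ 2 - phiSq ρ d a b = ρ * (1 - ρ) * (d ^ 2 - (a - b) ^ 2) := by
  unfold phiSq; ring

lemma phiSq_sub_sq_left : phiSq ρ d a b - (a - ρ * d) ^ 2 = ρ * (b - a + d) * (a + b - d) := by
  unfold phiSq; ring

lemma phiSq_sub_sq_right :
    phiSq ρ d a b - (b - (1 - ρ) * d) ^ 2 = (1 - ρ) * (a - b + d) * (a + b - d) := by
  unfold phiSq; ring

lemma phiSq_nonneg (hρ0 : 0 ≤ ρ) (hρ1 : ρ ≤ 1) (hd : 0 ≤ d) (hsum : d ≤ a + b) :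
    0 ≤ phiSq ρ d a b := by
  rw [phiSq_eq_sq_add]
  have hsq : d ^ 2 ≤ (a + b) ^ 2 := pow_le_pow_left₀ hd hsum 2
  exact add_nonneg (sq_nonneg _)
    (mul_nonneg (mul_nonneg hρ0 (sub_nonneg.2 hρ1)) (sub_nonneg.2 hsq))

lemma sub_le_sqrt_phiSq_left (hρ0 : 0 ≤ ρ) (hab : a - b ≤ d) (hsum : d ≤ a + b) :
    a - ρ * d ≤ √(phiSq ρ d a b) := by
  have hsq : (a - ρ * d) ^ 2 ≤ phiSq ρ d a b := by
    rw [← sub_nonneg, phiSq_sub_sq_left]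
    exact mul_nonneg (mul_nonneg hρ0 (by linarith)) (by linarith)
  exact (le_abs_self _).trans (Real.abs_le_sqrt hsq)

lemma sub_le_sqrt_phiSq_right (hρ1 : ρ ≤ 1) (hba : b - a ≤ d) (hsum : d ≤ a + b) :
    b - (1 - ρ) * d ≤ √(phiSq ρ d a b) := by
  have hsq : (b - (1 - ρ) * d) ^ 2 ≤ phiSq ρ d a b := by
    rw [← sub_nonneg, phiSq_sub_sq_right]
    exact mul_nonneg (mul_nonneg (by linarith) (by linarith)) (by linarith)
  exact (le_abs_self _).trans (Real.abs_le_sqrt hsq)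

lemma phiSq_le_sq_iff (hρ0 : 0 < ρ) (hρ1 : ρ < 1) (hd : 0 ≤ d) :
    phiSq ρ d a b ≤ ((1 - ρ) * a + ρ * b) ^ 2 ↔ |a - b| ≤ d := by
  rw [← sub_nonneg, sq_sub_phiSq, mul_nonneg_iff_of_pos_left (mul_pos hρ0 (by linarith)),
    sub_nonneg, sq_le_sq, abs_of_nonneg hd]

lemma sqrt_phiSq_le (hρ0 : 0 < ρ) (hρ1 : ρ < 1) (hd : 0 ≤ d) (hab : |a - b| ≤ d)
    (hL : 0 ≤ (1 - ρ) * a + ρ * b) : √(phiSq ρ d a b) ≤ (1 - ρ) * a + ρ * b :=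
  Real.sqrt_le_iff.2 ⟨hL, (phiSq_le_sq_iff hρ0 hρ1 hd).2 hab⟩

lemma mem_graph_of_mem_sigma_inter_Q3 (hρ0 : 0 < ρ) (hρ1 : ρ < 1) (hd : 0 ≤ d)
    (hc : c ^ 2 = phiSq ρ d a b) (h1 : a - c ≤ ρ * d) (h2 : b - c ≤ (1 - ρ) * d)
    (hsum : d ≤ a + b) (h4 : c ≤ (1 - ρ) * a + ρ * b) :
    (a - b ≤ d ∧ b - a ≤ d ∧ d ≤ a + b) ∧ c = √(phiSq ρ d a b) := by
  have hc0 : 0 ≤ c := by linarith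
  obtain ⟨hab, hba⟩ :=
    abs_sub_le_iff.1 ((phiSq_le_sq_iff hρ0 hρ1 hd).1 (hc ▸ pow_le_pow_left₀ hc0 h4 2))
  exact ⟨⟨hab, hba, hsum⟩, by rw [← hc, Real.sqrt_sq hc0]⟩

lemma mem_sigma_inter_Q3_of_mem_graph (hρ0 : 0 < ρ) (hρ1 : ρ < 1) (hd : 0 ≤ d)
    (hab : a - b ≤ d) (hba : b - a ≤ d) (hsum : d ≤ a + b) :
    √(phiSq ρ d a b) ^ 2 = phiSq ρ d a b ∧ a - √(phiSq ρ d a b) ≤ ρ * d ∧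
      b - √(phiSq ρ d a b) ≤ (1 - ρ) * d ∧ d ≤ a + b ∧
      √(phiSq ρ d a b) ≤ (1 - ρ) * a + ρ * b := by
  have hL : 0 ≤ (1 - ρ) * a + ρ * b :=
    add_nonneg (mul_nonneg (by linarith) (by linarith)) (mul_nonneg hρ0.le (by linarith))
  refine ⟨Real.sq_sqrt (phiSq_nonneg hρ0.le hρ1.le hd hsum), ?_, ?_, hsum,
    sqrt_phiSq_le hρ0 hρ1 hd (abs_sub_le_iff.2 ⟨hab, hba⟩) hL⟩
  · linarith [sub_le_sqrt_phiSq_left hρ0.le hab hsum]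
  · linarith [sub_le_sqrt_phiSq_right hρ1.le hba hsum]

end

/-- (i) the function φ is well defined on Q₂; (ii) σ ∩ Q₃ is the graph of
φ over Q₂. -/
theorem stmt13 (d21 ρ : ℝ) (hd : 0 < d21) (hρ1 : 0 < ρ) (hρ2 : ρ < 1)
    (Q2 : Set (ℝ × ℝ))
    (hQ2 : Q2 = {p : ℝ × ℝ | p.1 - p.2 ≤ d21 ∧ p.2 - p.1 ≤ d21 ∧ d21 ≤ p.1 + p.2})
    (Q3 : Set (ℝ × ℝ × ℝ))
    (hQ3 : Q3 = {T : ℝ × ℝ × ℝ |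
      T.1 - T.2.2 ≤ ρ * d21 ∧ T.2.1 - T.2.2 ≤ (1 - ρ) * d21 ∧ d21 ≤ T.1 + T.2.1 ∧
      0 ≤ (1 - ρ) * d21 * T.1 + ρ * d21 * T.2.1 - d21 * T.2.2})
    (σ : Set (ℝ × ℝ × ℝ))
    (hσ : σ = {T : ℝ × ℝ × ℝ |
      T.2.2 ^ 2 = (1 - ρ) * T.1 ^ 2 + ρ * T.2.1 ^ 2 - ρ * (1 - ρ) * d21 ^ 2}) :
    (∀ p ∈ Q2, 0 ≤ (1 - ρ) * p.1 ^ 2 + ρ * p.2 ^ 2 - ρ * (1 - ρ) * d21 ^ 2) ∧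
    σ ∩ Q3 = {T : ℝ × ℝ × ℝ | (T.1, T.2.1) ∈ Q2 ∧
      T.2.2 = Real.sqrt ((1 - ρ) * T.1 ^ 2 + ρ * T.2.1 ^ 2 - ρ * (1 - ρ) * d21 ^ 2)} := by
  subst hQ2 hQ3 hσ
  refine ⟨fun p hp => phiSq_nonneg hρ1.le hρ2.le hd.le hp.2.2, ?_⟩
  ext ⟨a, b, c⟩
  have hQ3_last : 0 ≤ (1 - ρ) * d21 * a + ρ * d21 * b - d21 * c ↔ c ≤ (1 - ρ) * a + ρ * b := by
    rw [show (1 - ρ) * d21 * a + ρ * d21 * b - d21 * c = d21 * ((1 - ρ) * a + ρ * b - c) by ring,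
      mul_nonneg_iff_of_pos_left hd, sub_nonneg]
  simp only [Set.mem_inter_iff, Set.mem_ofPred_eq, hQ3_last]
  constructor
  · rintro ⟨hc, h1, h2, hsum, h4⟩
    exact mem_graph_of_mem_sigma_inter_Q3 hρ1 hρ2 hd.le hc h1 h2 hsum h4
  · rintro ⟨⟨hab, hba, hsum⟩, rfl⟩
    exact mem_sigma_inter_Q3_of_mem_graph hρ1 hρ2 hd.le hab hba hsum
end

section
/- Suppose m₃ − m₁ = ρ(m₂ − m₁) for some ρ ∈ ℝ (collinear receivers). Then for all (𝒯₁,𝒯₂,𝒯₃) ∈ ℝ³ the quartic F factors as a perfect square: F(𝒯₁,𝒯₂,𝒯₃) = d₂₁²·((1−ρ)𝒯₁² + ρ𝒯₂² − 𝒯₃² − ρ(1−ρ)d₂₁²)². In other words, when the receivers degenerate to an aligned configuration, the Kummer quartic surface degenerates to a double quadric. -/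
/-!
Collinearity makes every difference a multiple of `d₂₁ = m₂ - m₁`: `d₃₁ = ρ d₂₁` and
`d₃₂ = (ρ - 1) d₂₁`. Every norm and inner product in `F` is then a polynomial in `ρ` times
`‖d₂₁‖²`, and the factorisation becomes a polynomial identity in `ρ`, `‖d₂₁‖²` and the `𝒯ᵢ`.
-/

section KummerQuartic

variable {E : Type*} [NormedAddCommGroup E] [InnerProductSpace ℝ E]

def kummerQuartic (m₁ m₂ m₃ : E) (T₁ T₂ T₃ : ℝ) : ℝ :=
  ‖m₃ - m₂‖ ^ 2 * T₁ ^ 4 + ‖m₃ - m₁‖ ^ 2 * T₂ ^ 4 + ‖m₂ - m₁‖ ^ 2 * T₃ ^ 4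
    - 2 * (inner ℝ (m₃ - m₂) (m₃ - m₁) : ℝ) * T₁ ^ 2 * T₂ ^ 2
    + 2 * (inner ℝ (m₃ - m₂) (m₂ - m₁) : ℝ) * T₁ ^ 2 * T₃ ^ 2
    - 2 * (inner ℝ (m₃ - m₁) (m₂ - m₁) : ℝ) * T₂ ^ 2 * T₃ ^ 2
    - 2 * (inner ℝ (m₂ - m₁) (m₃ - m₁) : ℝ) * ‖m₃ - m₂‖ ^ 2 * T₁ ^ 2
    + 2 * (inner ℝ (m₃ - m₂) (m₂ - m₁) : ℝ) * ‖m₃ - m₁‖ ^ 2 * T₂ ^ 2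
    - 2 * (inner ℝ (m₃ - m₂) (m₃ - m₁) : ℝ) * ‖m₂ - m₁‖ ^ 2 * T₃ ^ 2
    + ‖m₂ - m₁‖ ^ 2 * ‖m₃ - m₁‖ ^ 2 * ‖m₃ - m₂‖ ^ 2

lemma sub_eq_sub_one_smul_of_sub_eq_smul {R M : Type*} [Ring R] [AddCommGroup M] [Module R M]
    {m₁ m₂ m₃ : M} {ρ : R} (hcol : m₃ - m₁ = ρ • (m₂ - m₁)) :
    m₃ - m₂ = (ρ - 1) • (m₂ - m₁) := by
  rw [sub_smul, one_smul, ← hcol, sub_sub_sub_cancel_right]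

theorem kummerQuartic_eq_of_sub_eq_smul {m₁ m₂ m₃ : E} {ρ : ℝ}
    (hcol : m₃ - m₁ = ρ • (m₂ - m₁)) (T₁ T₂ T₃ : ℝ) :
    kummerQuartic m₁ m₂ m₃ T₁ T₂ T₃ = ‖m₂ - m₁‖ ^ 2 *
      ((1 - ρ) * T₁ ^ 2 + ρ * T₂ ^ 2 - T₃ ^ 2 - ρ * (1 - ρ) * ‖m₂ - m₁‖ ^ 2) ^ 2 := by
  rw [kummerQuartic, sub_eq_sub_one_smul_of_sub_eq_smul hcol, hcol]
  simp only [norm_smul, real_inner_smul_left, real_inner_smul_right, real_inner_self_eq_norm_sq,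
    Real.norm_eq_abs, mul_pow, sq_abs]
  ring

end KummerQuartic

theorem stmt15_general (m₁ m₂ m₃ : EuclideanSpace ℝ (Fin 2))
    (ρ : ℝ) (hcol : m₃ - m₁ = ρ • (m₂ - m₁)) :
    ∀ T₁ T₂ T₃ : ℝ,
      ‖m₃ - m₂‖ ^ 2 * T₁ ^ 4 + ‖m₃ - m₁‖ ^ 2 * T₂ ^ 4 + ‖m₂ - m₁‖ ^ 2 * T₃ ^ 4
      - 2 * (inner ℝ (m₃ - m₂) (m₃ - m₁) : ℝ) * T₁ ^ 2 * T₂ ^ 2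
      + 2 * (inner ℝ (m₃ - m₂) (m₂ - m₁) : ℝ) * T₁ ^ 2 * T₃ ^ 2
      - 2 * (inner ℝ (m₃ - m₁) (m₂ - m₁) : ℝ) * T₂ ^ 2 * T₃ ^ 2
      - 2 * (inner ℝ (m₂ - m₁) (m₃ - m₁) : ℝ) * ‖m₃ - m₂‖ ^ 2 * T₁ ^ 2
      + 2 * (inner ℝ (m₃ - m₂) (m₂ - m₁) : ℝ) * ‖m₃ - m₁‖ ^ 2 * T₂ ^ 2
      - 2 * (inner ℝ (m₃ - m₂) (m₃ - m₁) : ℝ) * ‖m₂ - m₁‖ ^ 2 * T₃ ^ 2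
      + ‖m₂ - m₁‖ ^ 2 * ‖m₃ - m₁‖ ^ 2 * ‖m₃ - m₂‖ ^ 2 =
      ‖m₂ - m₁‖ ^ 2 *
        ((1 - ρ) * T₁ ^ 2 + ρ * T₂ ^ 2 - T₃ ^ 2 - ρ * (1 - ρ) * ‖m₂ - m₁‖ ^ 2) ^ 2 :=
  kummerQuartic_eq_of_sub_eq_smul hcol

/-- for collinear receivers, the Kummer quartic F degenerates to a
double quadric: F = d₂₁²·((1−ρ)𝒯₁² + ρ𝒯₂² − 𝒯₃² − ρ(1−ρ)d₂₁²)². -/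
theorem stmt15 (m₁ m₂ m₃ : EuclideanSpace ℝ (Fin 2))
    (hd12 : m₁ ≠ m₂) (hd13 : m₁ ≠ m₃) (hd23 : m₂ ≠ m₃)
    (ρ : ℝ) (hcol : m₃ - m₁ = ρ • (m₂ - m₁)) :
    ∀ T₁ T₂ T₃ : ℝ,
      ‖m₃ - m₂‖ ^ 2 * T₁ ^ 4 + ‖m₃ - m₁‖ ^ 2 * T₂ ^ 4 + ‖m₂ - m₁‖ ^ 2 * T₃ ^ 4
      - 2 * (inner ℝ (m₃ - m₂) (m₃ - m₁) : ℝ) * T₁ ^ 2 * T₂ ^ 2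
      + 2 * (inner ℝ (m₃ - m₂) (m₂ - m₁) : ℝ) * T₁ ^ 2 * T₃ ^ 2
      - 2 * (inner ℝ (m₃ - m₁) (m₂ - m₁) : ℝ) * T₂ ^ 2 * T₃ ^ 2
      - 2 * (inner ℝ (m₂ - m₁) (m₃ - m₁) : ℝ) * ‖m₃ - m₂‖ ^ 2 * T₁ ^ 2
      + 2 * (inner ℝ (m₃ - m₂) (m₂ - m₁) : ℝ) * ‖m₃ - m₁‖ ^ 2 * T₂ ^ 2
      - 2 * (inner ℝ (m₃ - m₂) (m₃ - m₁) : ℝ) * ‖m₂ - m₁‖ ^ 2 * T₃ ^ 2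
      + ‖m₂ - m₁‖ ^ 2 * ‖m₃ - m₁‖ ^ 2 * ‖m₃ - m₂‖ ^ 2 =
      ‖m₂ - m₁‖ ^ 2 *
        ((1 - ρ) * T₁ ^ 2 + ρ * T₂ ^ 2 - T₃ ^ 2 - ρ * (1 - ρ) * ‖m₂ - m₁‖ ^ 2) ^ 2 :=
  stmt15_general m₁ m₂ m₃ ρ hcol
end

section
/- Let m₁, m₂, m₃ ∈ ℝ³ be non-collinear and let H be the plane they affinely span. Then: (i) for every x ∈ ℝ³, F(d₁(x), d₂(x), d₃(x)) ≤ 0, with equality if and only if x ∈ H; (ii) for every x ∈ ℝ³, the fiber 𝒯_{3,3}⁻¹(𝒯_{3,3}(x)) has exactly one element if x ∈ H, and exactly two elements — mirror images of each other in the plane H — if x ∉ H. -/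
/-!
Up to the factor `-4`, `F(d₁(x), d₂(x), d₃(x))` is the Gram determinant of `x - m₁, m₂ - m₁,
m₃ - m₁` (a Cayley–Menger determinant: `36` times the squared volume of the tetrahedron
`x m₁ m₂ m₃`). It is therefore `≤ 0`, and vanishes exactly when `x - m₁` lies in the span of the independent vectors
`m₂ - m₁, m₃ - m₁`, i.e. when `x ∈ H`.

A point `z` with the same distances as `x` to `m₁, m₂, m₃` has the same distances as `x` to every
point of `H`, because perpendicular bisectors are affine subspaces. Then `z - x ⊥ H`, both points
have the same foot on `H`, and as `H` is a plane in `ℝ³` this leaves only `z = x` and the mirror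
image of `x` in `H`.
-/

open EuclideanGeometry RealInnerProductSpace
open Module (finrank)

variable {V : Type*} [NormedAddCommGroup V] [InnerProductSpace ℝ V]

def rangeQuartic (m₁ m₂ m₃ : V) (T₁ T₂ T₃ : ℝ) : ℝ :=
  ‖m₃ - m₂‖ ^ 2 * T₁ ^ 4 + ‖m₃ - m₁‖ ^ 2 * T₂ ^ 4 + ‖m₂ - m₁‖ ^ 2 * T₃ ^ 4
    - 2 * ⟪m₃ - m₂, m₃ - m₁⟫ * T₁ ^ 2 * T₂ ^ 2
    + 2 * ⟪m₃ - m₂, m₂ - m₁⟫ * T₁ ^ 2 * T₃ ^ 2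
    - 2 * ⟪m₃ - m₁, m₂ - m₁⟫ * T₂ ^ 2 * T₃ ^ 2
    - 2 * ⟪m₂ - m₁, m₃ - m₁⟫ * ‖m₃ - m₂‖ ^ 2 * T₁ ^ 2
    + 2 * ⟪m₃ - m₂, m₂ - m₁⟫ * ‖m₃ - m₁‖ ^ 2 * T₂ ^ 2
    - 2 * ⟪m₃ - m₂, m₃ - m₁⟫ * ‖m₂ - m₁‖ ^ 2 * T₃ ^ 2
    + ‖m₂ - m₁‖ ^ 2 * ‖m₃ - m₁‖ ^ 2 * ‖m₃ - m₂‖ ^ 2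

theorem rangeQuartic_norm_sub_eq_det_gram (m₁ m₂ m₃ x : V) :
    rangeQuartic m₁ m₂ m₃ ‖x - m₁‖ ‖x - m₂‖ ‖x - m₃‖ =
      -4 * (Matrix.gram ℝ ![x - m₁, m₂ - m₁, m₃ - m₁]).det := by
  have hx₂ : x - m₂ = (x - m₁) - (m₂ - m₁) := by abel
  have hx₃ : x - m₃ = (x - m₁) - (m₃ - m₁) := by abel
  have h₃₂ : m₃ - m₂ = (m₃ - m₁) - (m₂ - m₁) := by abel
  have h4 (v : V) : ‖v‖ ^ 4 = ⟪v, v⟫ ^ 2 := by rw [real_inner_self_eq_norm_sq]; ring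
  rw [rangeQuartic, Matrix.det_fin_three, hx₂, hx₃, h₃₂]
  generalize x - m₁ = a, m₂ - m₁ = u, m₃ - m₁ = v
  simp only [Matrix.gram_apply, Matrix.cons_val_zero, Matrix.cons_val_one, Matrix.cons_val_two,
    Matrix.head_cons, Matrix.tail_cons, h4, ← real_inner_self_eq_norm_sq, inner_sub_left,
    inner_sub_right, real_inner_comm a u, real_inner_comm a v, real_inner_comm u v]
  ring

theorem direction_affineSpan_triple (m₁ m₂ m₃ : V) :
    (affineSpan ℝ {m₁, m₂, m₃}).direction = Submodule.span ℝ {m₂ - m₁, m₃ - m₁} := by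
  rw [direction_affineSpan, vectorSpan_eq_span_vsub_set_right ℝ (Set.mem_insert m₁ _)]
  simp [Set.image_insert_eq, Submodule.span_insert_zero]

theorem linearIndependent_sub_of_not_collinear {m₁ m₂ m₃ : V}
    (h : ¬Collinear ℝ {m₁, m₂, m₃}) : LinearIndependent ℝ ![m₂ - m₁, m₃ - m₁] := by
  rw [LinearIndependent.pair_iff]
  intro s t hst
  have hw := (affineIndependent_iff_not_collinear_set.mpr h).eq_zero_of_sum_eq_zero
    (s := Finset.univ) (w := ![-(s + t), s, t]) (by simp [Fin.sum_univ_three])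
    (by
      simp only [Fin.sum_univ_three, Matrix.cons_val_zero, Matrix.cons_val_one, Matrix.cons_val]
      rw [← hst]
      module)
  exact ⟨hw 1 (by simp), hw 2 (by simp)⟩

theorem det_gram_eq_zero_iff_mem_affineSpan {m₁ m₂ m₃ : V} (h : ¬Collinear ℝ {m₁, m₂, m₃})
    (x : V) :
    (Matrix.gram ℝ ![x - m₁, m₂ - m₁, m₃ - m₁]).det = 0 ↔ x ∈ affineSpan ℝ {m₁, m₂, m₃} := by
  rw [← not_iff_not, ← ne_eq, Matrix.det_gram_ne_zero_iff_linearIndependent,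
    ← AffineSubspace.vsub_right_mem_direction_iff_mem (mem_affineSpan ℝ (Set.mem_insert m₁ _)),
    direction_affineSpan_triple, vsub_eq_sub]
  change LinearIndependent ℝ (Fin.cons (x - m₁) ![m₂ - m₁, m₃ - m₁]) ↔ _
  rw [linearIndependent_finCons]
  simp [linearIndependent_sub_of_not_collinear h, Matrix.range_cons, Set.pair_comm]

theorem finrank_direction_affineSpan_triple {m₁ m₂ m₃ : V}
    (h : ¬Collinear ℝ {m₁, m₂, m₃}) : finrank ℝ (affineSpan ℝ {m₁, m₂, m₃}).direction = 2 := by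
  have := (affineIndependent_iff_finrank_vectorSpan_eq ℝ _ (Fintype.card_fin 3)).mp
    (affineIndependent_iff_not_collinear_set.mpr h)
  rw [direction_affineSpan]
  rwa [Matrix.range_cons, Matrix.range_cons_cons_empty, Set.singleton_union] at this

theorem finrank_orthogonal_direction_affineSpan_triple [FiniteDimensional ℝ V]
    (hV : finrank ℝ V = 3) {m₁ m₂ m₃ : V} (h : ¬Collinear ℝ {m₁, m₂, m₃}) :
    finrank ℝ (affineSpan ℝ {m₁, m₂, m₃}).directionᗮ = 1 := by
  have := Submodule.finrank_add_finrank_orthogonal (affineSpan ℝ {m₁, m₂, m₃}).direction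
  rw [finrank_direction_affineSpan_triple h, hV] at this
  omega

theorem Submodule.eq_or_eq_neg_of_norm_eq {K : Submodule ℝ V} (hK : finrank ℝ K = 1) {a b : V}
    (ha : a ∈ K) (hb : b ∈ K) (h : ‖a‖ = ‖b‖) : a = b ∨ a = -b := by
  obtain ⟨e, -, he⟩ := finrank_eq_one_iff'.mp hK
  obtain ⟨c, hc⟩ := he ⟨a, ha⟩
  obtain ⟨d, hd⟩ := he ⟨b, hb⟩
  obtain rfl : c • (e : V) = a := congrArg Subtype.val hc
  obtain rfl : d • (e : V) = b := congrArg Subtype.val hd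
  rw [norm_smul, norm_smul, Real.norm_eq_abs, Real.norm_eq_abs] at h
  rcases eq_or_ne (e : V) 0 with he0 | he0
  · simp [he0]
  rcases abs_eq_abs.mp (mul_right_cancel₀ (norm_ne_zero_iff.mpr he0) h) with rfl | rfl
  · exact Or.inl rfl
  · exact Or.inr (neg_smul _ _)

section Reflection

variable {P : Type*} [MetricSpace P] [NormedAddTorsor V P]

theorem forall_mem_affineSpan_dist_eq_iff {S : Set P} {x z : P} :
    (∀ p ∈ affineSpan ℝ S, dist z p = dist x p) ↔ ∀ p ∈ S, dist z p = dist x p := by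
  refine ⟨fun h p hp ↦ h p (subset_affineSpan ℝ S hp), fun h p hp ↦ ?_⟩
  have hS : S ⊆ AffineSubspace.perpBisector z x := fun p hp ↦
    AffineSubspace.mem_perpBisector_iff_dist_eq'.mpr (h p hp)
  exact AffineSubspace.mem_perpBisector_iff_dist_eq'.mp (affineSpan_le.mpr hS hp)

variable {s : AffineSubspace ℝ P} [Nonempty s] [s.direction.HasOrthogonalProjection]

theorem midpoint_reflection (x : P) : midpoint ℝ x (reflection s x) = orthogonalProjection s x :=
  midpoint_eq_iff.mpr (reflection_apply' s x).symm

theorem vsub_reflection_mem_direction_orthogonal (x : P) :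
    x -ᵥ reflection s x ∈ s.directionᗮ := by
  have hx := vsub_orthogonalProjection_mem_direction_orthogonal s x
  rw [reflection_apply', vsub_vadd_eq_vsub_sub, ← neg_vsub_eq_vsub_rev x, sub_neg_eq_add]
  exact s.directionᗮ.add_mem hx hx

theorem eq_or_eq_reflection_of_forall_dist_eq (hs : finrank ℝ s.directionᗮ = 1) {x z : P}
    (h : ∀ p ∈ s, dist z p = dist x p) : z = x ∨ z = reflection s x := by
  set q : P := ↑(orthogonalProjection s x)
  have hzx : z -ᵥ x ∈ s.directionᗮ := by
    rw [Submodule.mem_orthogonal']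
    intro v hv
    obtain ⟨p, hp, rfl⟩ := (s.mem_direction_iff_eq_vsub_right (orthogonalProjection_mem x) v).mp hv
    rw [real_inner_comm]
    exact inner_vsub_vsub_of_dist_eq_of_dist_eq (h q (orthogonalProjection_mem x)).symm
      (h p hp).symm
  have hq : (orthogonalProjection s z : P) = q :=
    congrArg Subtype.val (orthogonalProjection_eq_orthogonalProjection_iff_vsub_mem.mpr hzx)
  have hz := vsub_orthogonalProjection_mem_direction_orthogonal s z
  rw [hq] at hz
  rcases Submodule.eq_or_eq_neg_of_norm_eq hs hz
    (vsub_orthogonalProjection_mem_direction_orthogonal s x)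
    (by rw [← dist_eq_norm_vsub, ← dist_eq_norm_vsub, h q (orthogonalProjection_mem x)])
    with h' | h'
  · exact Or.inl (vsub_left_cancel h')
  · rw [neg_vsub_eq_vsub_rev] at h'
    exact Or.inr (by rw [reflection_apply']; exact (eq_vadd_iff_vsub_eq _ _ _).mpr h')

end Reflection

theorem norm_sub_eq_three_iff_eq_or_eq_reflection [FiniteDimensional ℝ V]
    (hV : finrank ℝ V = 3) {m₁ m₂ m₃ : V} (h : ¬Collinear ℝ {m₁, m₂, m₃}) {x z : V} :
    (‖z - m₁‖ = ‖x - m₁‖ ∧ ‖z - m₂‖ = ‖x - m₂‖ ∧ ‖z - m₃‖ = ‖x - m₃‖) ↔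
      z = x ∨ z = reflection (affineSpan ℝ {m₁, m₂, m₃}) x := by
  constructor
  · intro hz
    refine eq_or_eq_reflection_of_forall_dist_eq
      (finrank_orthogonal_direction_affineSpan_triple hV h) ?_
    rw [forall_mem_affineSpan_dist_eq_iff]
    simpa [dist_eq_norm] using hz
  · rintro (rfl | rfl)
    · simp
    · simp only [← dist_eq_norm, dist_comm _ (_ : V)]
      refine ⟨?_, ?_, ?_⟩ <;> exact dist_reflection_eq_of_mem _ (mem_affineSpan ℝ (by simp)) x

theorem stmt19_general (m₁ m₂ m₃ : EuclideanSpace ℝ (Fin 3))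
    (hnc : ¬ Collinear ℝ ({m₁, m₂, m₃} : Set (EuclideanSpace ℝ (Fin 3))))
    (F : ℝ → ℝ → ℝ → ℝ)
    (hF : ∀ T₁ T₂ T₃, F T₁ T₂ T₃ =
      ‖m₃ - m₂‖ ^ 2 * T₁ ^ 4 + ‖m₃ - m₁‖ ^ 2 * T₂ ^ 4 + ‖m₂ - m₁‖ ^ 2 * T₃ ^ 4
      - 2 * (inner ℝ (m₃ - m₂) (m₃ - m₁) : ℝ) * T₁ ^ 2 * T₂ ^ 2
      + 2 * (inner ℝ (m₃ - m₂) (m₂ - m₁) : ℝ) * T₁ ^ 2 * T₃ ^ 2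
      - 2 * (inner ℝ (m₃ - m₁) (m₂ - m₁) : ℝ) * T₂ ^ 2 * T₃ ^ 2
      - 2 * (inner ℝ (m₂ - m₁) (m₃ - m₁) : ℝ) * ‖m₃ - m₂‖ ^ 2 * T₁ ^ 2
      + 2 * (inner ℝ (m₃ - m₂) (m₂ - m₁) : ℝ) * ‖m₃ - m₁‖ ^ 2 * T₂ ^ 2
      - 2 * (inner ℝ (m₃ - m₂) (m₃ - m₁) : ℝ) * ‖m₂ - m₁‖ ^ 2 * T₃ ^ 2
      + ‖m₂ - m₁‖ ^ 2 * ‖m₃ - m₁‖ ^ 2 * ‖m₃ - m₂‖ ^ 2)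
    (T : EuclideanSpace ℝ (Fin 3) → ℝ × ℝ × ℝ)
    (hT : ∀ x, T x = (‖x - m₁‖, ‖x - m₂‖, ‖x - m₃‖))
    (H : AffineSubspace ℝ (EuclideanSpace ℝ (Fin 3)))
    (hH : H = affineSpan ℝ ({m₁, m₂, m₃} : Set (EuclideanSpace ℝ (Fin 3)))) :
    (∀ x : EuclideanSpace ℝ (Fin 3),
      F ‖x - m₁‖ ‖x - m₂‖ ‖x - m₃‖ ≤ 0 ∧
      (F ‖x - m₁‖ ‖x - m₂‖ ‖x - m₃‖ = 0 ↔ x ∈ H)) ∧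
    (∀ x : EuclideanSpace ℝ (Fin 3),
      (x ∈ H → T ⁻¹' {T x} = {x}) ∧
      (x ∉ H → ∃ y : EuclideanSpace ℝ (Fin 3), y ≠ x ∧ T ⁻¹' {T x} = {x, y} ∧
        midpoint ℝ x y ∈ H ∧ ∀ v ∈ H.direction, (inner ℝ (x - y) v : ℝ) = 0)) := by
  subst hH
  have hV : finrank ℝ (EuclideanSpace ℝ (Fin 3)) = 3 := finrank_euclideanSpace_fin
  have hfiber (x : EuclideanSpace ℝ (Fin 3)) :
      T ⁻¹' {T x} = {x, reflection (affineSpan ℝ {m₁, m₂, m₃}) x} := by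
    ext z
    simp only [Set.mem_preimage, Set.mem_singleton_iff, Set.mem_insert_iff, hT, Prod.mk.injEq]
    exact norm_sub_eq_three_iff_eq_or_eq_reflection hV hnc
  refine ⟨fun x ↦ ?_, fun x ↦ ⟨fun hx ↦ ?_, fun hx ↦ ?_⟩⟩
  · have hFx : F ‖x - m₁‖ ‖x - m₂‖ ‖x - m₃‖ = rangeQuartic m₁ m₂ m₃ ‖x - m₁‖ ‖x - m₂‖ ‖x - m₃‖ :=
      hF _ _ _
    rw [hFx, rangeQuartic_norm_sub_eq_det_gram, mul_eq_zero,
      det_gram_eq_zero_iff_mem_affineSpan hnc]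
    have hdet := (Matrix.posSemidef_gram ℝ ![x - m₁, m₂ - m₁, m₃ - m₁]).det_nonneg
    exact ⟨by linarith, by norm_num⟩
  · rw [hfiber, (reflection_eq_self_iff x).mpr hx, Set.pair_eq_singleton]
  · refine ⟨reflection _ x, fun h ↦ hx ((reflection_eq_self_iff x).mp h), hfiber x, ?_,
      fun v hv ↦ ?_⟩
    · rw [midpoint_reflection]
      exact orthogonalProjection_mem x
    · exact Submodule.inner_left_of_mem_orthogonal hv (vsub_reflection_mem_direction_orthogonal x)

/-- for non-collinear receivers in ℝ³ spanning the plane H: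
(i) F(d₁(x),d₂(x),d₃(x)) ≤ 0 with equality iff x ∈ H; (ii) the fiber of 𝒯_{3,3}
through x is {x} if x ∈ H, and otherwise consists of exactly two points which are
mirror images of each other in the plane H. -/
theorem stmt19 (m₁ m₂ m₃ : EuclideanSpace ℝ (Fin 3))
    (hd12 : m₁ ≠ m₂) (hd13 : m₁ ≠ m₃) (hd23 : m₂ ≠ m₃)
    (hnc : ¬ Collinear ℝ ({m₁, m₂, m₃} : Set (EuclideanSpace ℝ (Fin 3))))
    (F : ℝ → ℝ → ℝ → ℝ)
    (hF : ∀ T₁ T₂ T₃, F T₁ T₂ T₃ =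
      ‖m₃ - m₂‖ ^ 2 * T₁ ^ 4 + ‖m₃ - m₁‖ ^ 2 * T₂ ^ 4 + ‖m₂ - m₁‖ ^ 2 * T₃ ^ 4
      - 2 * (inner ℝ (m₃ - m₂) (m₃ - m₁) : ℝ) * T₁ ^ 2 * T₂ ^ 2
      + 2 * (inner ℝ (m₃ - m₂) (m₂ - m₁) : ℝ) * T₁ ^ 2 * T₃ ^ 2
      - 2 * (inner ℝ (m₃ - m₁) (m₂ - m₁) : ℝ) * T₂ ^ 2 * T₃ ^ 2
      - 2 * (inner ℝ (m₂ - m₁) (m₃ - m₁) : ℝ) * ‖m₃ - m₂‖ ^ 2 * T₁ ^ 2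
      + 2 * (inner ℝ (m₃ - m₂) (m₂ - m₁) : ℝ) * ‖m₃ - m₁‖ ^ 2 * T₂ ^ 2
      - 2 * (inner ℝ (m₃ - m₂) (m₃ - m₁) : ℝ) * ‖m₂ - m₁‖ ^ 2 * T₃ ^ 2
      + ‖m₂ - m₁‖ ^ 2 * ‖m₃ - m₁‖ ^ 2 * ‖m₃ - m₂‖ ^ 2)
    (T : EuclideanSpace ℝ (Fin 3) → ℝ × ℝ × ℝ)
    (hT : ∀ x, T x = (‖x - m₁‖, ‖x - m₂‖, ‖x - m₃‖))
    (H : AffineSubspace ℝ (EuclideanSpace ℝ (Fin 3)))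
    (hH : H = affineSpan ℝ ({m₁, m₂, m₃} : Set (EuclideanSpace ℝ (Fin 3)))) :
    (∀ x : EuclideanSpace ℝ (Fin 3),
      F ‖x - m₁‖ ‖x - m₂‖ ‖x - m₃‖ ≤ 0 ∧
      (F ‖x - m₁‖ ‖x - m₂‖ ‖x - m₃‖ = 0 ↔ x ∈ H)) ∧
    (∀ x : EuclideanSpace ℝ (Fin 3),
      (x ∈ H → T ⁻¹' {T x} = {x}) ∧
      (x ∉ H → ∃ y : EuclideanSpace ℝ (Fin 3), y ≠ x ∧ T ⁻¹' {T x} = {x, y} ∧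
        midpoint ℝ x y ∈ H ∧ ∀ v ∈ H.direction, (inner ℝ (x - y) v : ℝ) = 0)) :=
  stmt19_general m₁ m₂ m₃ hnc F hF T hT H hH
end
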